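/- Let (α,u) be a bypass in Q and let ψ ∈ T_{≤(α,u)}. Then there exist a nonnegative integer n, bypasses (α_1,u_1) < ⋯ < (α_n,u_n) ≤ (α,u), and scalars τ_1,…,τ_n ∈ k^* such that ψ = φ_{α_n,u_n,τ_n} ∘ ⋯ ∘ φ_{α_1,u_1,τ_1}. Moreover, the integer n and the sequence (α_1,u_1,τ_1),…,(α_n,u_n,τ_n) are unique with these properties. -/

import Mathlib

attribute [local instance] Classical.propDecidable

/-- A quiver given by a set of vertices, a set of arrows and source/target maps. -/
structure Quiv where
  V : Type
  A : Type
  s : A → V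
  t : A → V

namespace Quiv

section Basic

variable (Q : Quiv)

/-- A (nontrivial) path is a nonempty list of composable arrows, listed in the
order they are traversed. -/
def IsPath (p : List Q.A) : Prop :=
  p ≠ [] ∧ p.Chain' (fun a b => Q.t a = Q.s b)

/-- Source of a nonempty list of arrows. -/
def src (p : List Q.A) : Option Q.V := p.head?.map Q.s

/-- Target of a nonempty list of arrows. -/
def tgt (p : List Q.A) : Option Q.V := p.getLast?.map Q.t

/-- `Q` has no oriented cycle: no nontrivial path has equal source and target. -/
def NoCycle : Prop := ∀ p, Q.IsPath p → Q.src p ≠ Q.tgt p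

/-- `Q` has no multiple arrows: distinct arrows never have both the same source
and the same target. -/
def NoMultipleArrows : Prop :=
  ∀ a b : Q.A, Q.s a = Q.s b → Q.t a = Q.t b → a = b

/-- A bypass `(α, u)`: `u` is a path parallel to the arrow `α` and distinct from it. -/
def IsBypass (α : Q.A) (u : List Q.A) : Prop :=
  Q.IsPath u ∧ Q.src u = some (Q.s α) ∧ Q.tgt u = some (Q.t α) ∧ u ≠ [α]

/-- `Repl n u v` : `v` is obtained from `u` by replacing `n` of its arrows (at
increasing positions) by bypass paths. -/
inductive Repl : ℕ → List Q.A → List Q.A → Prop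
  | nil : Repl 0 [] []
  | keep (a : Q.A) {n : ℕ} {u v : List Q.A} : Repl n u v → Repl n (a :: u) (a :: v)
  | repl {a : Q.A} {p : List Q.A} {n : ℕ} {u v : List Q.A} :
      Q.IsBypass a p → Repl n u v → Repl (n + 1) (a :: u) (p ++ v)

/-- `v` is derived of `u` of order `t`. -/
def DerivedOfOrder (t : ℕ) (u v : List Q.A) : Prop := 1 ≤ t ∧ Q.Repl t u v

/-- `v` is derived of `u` (of some order `t ≥ 1`). -/
def Derived (u v : List Q.A) : Prop := ∃ t, Q.DerivedOfOrder t u v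

/-- `W(α)` : the number of bypasses of the form `(α, u)`. -/
noncomputable def Wa (α : Q.A) : ℕ := Nat.card {u : List Q.A // Q.IsBypass α u}

/-- `W(u)` for a path `u = α_n ⋯ α_1` : the sum of the `W(α_i)`. -/
noncomputable def Wp (u : List Q.A) : ℕ := (u.map Q.Wa).sum

/-- A linear order `<` on the nontrivial paths of `Q` refining the `W`-ordering and
compatible with concatenation, as in Le Meur's Definition 2.5. -/
structure PathOrder where
  lt : List Q.A → List Q.A → Prop
  irrefl : ∀ p, Q.IsPath p → ¬ lt p p
  trans' : ∀ p q r, lt p q → lt q r → lt p r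
  total' : ∀ p q, Q.IsPath p → Q.IsPath q → p ≠ q → lt p q ∨ lt q p
  wlt : ∀ p q, Q.IsPath p → Q.IsPath q → Q.Wp p < Q.Wp q → lt p q
  concat : ∀ u u' v v' : List Q.A, lt v u → lt v' u' →
    Q.IsPath (v ++ v') → Q.IsPath (u ++ u') → lt (v ++ v') (u ++ u')

end Basic

/-- Lexicographic (strict) order on bypasses: `(α,u) < (β,v)` iff `α < β`, or
`α = β` and `u < v`. -/
def PathOrder.bplt {Q : Quiv} (o : Q.PathOrder) (b c : Q.A × List Q.A) : Prop :=
  o.lt [b.1] [c.1] ∨ (b.1 = c.1 ∧ o.lt b.2 c.2)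

/-- Lexicographic non-strict order on bypasses. -/
def PathOrder.bple {Q : Quiv} (o : Q.PathOrder) (b c : Q.A × List Q.A) : Prop :=
  o.bplt b c ∨ b = c

section Linear

variable (Q : Quiv) (k : Type) [Field k]

/-- Concatenation product on the free `k`-module on lists of arrows (the morphism
spaces of the path category `kQ`). -/
noncomputable def mulF (f g : List Q.A →₀ k) : List Q.A →₀ k :=
  f.sum fun p c => g.sum fun q d => Finsupp.single (p ++ q) (c * d)

/-- Image of the arrow `a` under the transvection `φ_{α,u,τ}`. -/
noncomputable def arrowImg (α : Q.A) (u : List Q.A) (τ : k) (a : Q.A) : List Q.A →₀ k :=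
  if a = α then Finsupp.single [a] 1 + τ • Finsupp.single u 1 else Finsupp.single [a] 1

/-- Image of a path under the transvection `φ_{α,u,τ}`. -/
noncomputable def substPoly (α : Q.A) (u : List Q.A) (τ : k) : List Q.A → (List Q.A →₀ k)
  | [] => Finsupp.single [] 1
  | a :: rest => mulF Q k (arrowImg Q k α u τ a) (substPoly α u τ rest)

/-- The transvection `φ_{α,u,τ}` as a linear endomorphism of `kQ` : it is the
`k`-linear automorphism of `kQ` fixing every vertex, sending `α` to `α + τ u`, and
fixing every other arrow. -/
noncomputable def substMap (α : Q.A) (u : List Q.A) (τ : k) :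
    Module.End k (List Q.A →₀ k) :=
  Finsupp.linearCombination k (substPoly Q k α u τ)

/-- `ψ` lies in the group `T` generated by the transvections, i.e. it is a finite
product of transvections. -/
def MemT (ψ : Module.End k (List Q.A →₀ k)) : Prop :=
  ∃ L : List (Q.A × List Q.A × k),
    (∀ x ∈ L, Q.IsBypass x.1 x.2.1) ∧
    ψ = (L.map fun x => substMap Q k x.1 x.2.1 x.2.2).prod

/-- `r'` is a subexpression of `r`. -/
def Subexpr (r' r : List Q.A →₀ k) : Prop :=
  r'.support ⊆ r.support ∧ ∀ p ∈ r'.support, r' p = r p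

/-- A minimal relation of `I` : a nonzero `r ∈ I` such that `0` and `r` are the only
subexpressions of `r` lying in `I`. -/
def IsMinimalRel (I : Submodule k (List Q.A →₀ k)) (r : List Q.A →₀ k) : Prop :=
  r ∈ I ∧ r ≠ 0 ∧ ∀ r', Subexpr Q k r' r → r' ∈ I → r' = 0 ∨ r' = r

/-- `ReplExp g u v c` : `v` is obtained from the path `u` by replacing some of its
arrows `a` (at increasing positions) by paths `w ∈ supp(g a)`, `w ≠ a`, and `c` is
the product of the corresponding coefficients `w^*(g a)`. -/
inductive ReplExp (g : Q.A → (List Q.A →₀ k)) : List Q.A → List Q.A → k → Prop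
  | nil : ReplExp g [] [] 1
  | keep (a : Q.A) {u v : List Q.A} {c : k} :
      ReplExp g u v c → ReplExp g (a :: u) (a :: v) c
  | repl (a : Q.A) {w u v : List Q.A} {c : k} :
      w ∈ (g a).support → w ≠ [a] → ReplExp g u v c →
      ReplExp g (a :: u) (w ++ v) ((g a) w * c)

/-- The homotopy relation `∼_I` on walks. A walk is a list of pairs `(a, d)` where
`a` is an arrow and `d` is `true` for `a` and `false` for the formal inverse `a⁻¹`;
the relation is the smallest equivalence relation compatible with concatenation,
cancelling `a a⁻¹` and `a⁻¹ a`, and identifying any two paths lying in the support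
of a minimal relation of `I`. -/
inductive Homotopic (I : Submodule k (List Q.A →₀ k)) :
    List (Q.A × Bool) → List (Q.A × Bool) → Prop
  | refl (w : List (Q.A × Bool)) : Homotopic I w w
  | symm {w w' : List (Q.A × Bool)} : Homotopic I w w' → Homotopic I w' w
  | trans {w w' w'' : List (Q.A × Bool)} :
      Homotopic I w w' → Homotopic I w' w'' → Homotopic I w w''
  | cancel (a : Q.A) : Homotopic I [(a, true), (a, false)] []
  | cancel' (a : Q.A) : Homotopic I [(a, false), (a, true)] []
  | rel {r : List Q.A →₀ k} (hr : IsMinimalRel Q k I r) {u v : List Q.A}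
      (hu : u ∈ r.support) (hv : v ∈ r.support) :
      Homotopic I (u.map fun a => (a, true)) (v.map fun a => (a, true))
  | congr (w x : List (Q.A × Bool)) {v v' : List (Q.A × Bool)} :
      Homotopic I v v' → Homotopic I (w ++ v ++ x) (w ++ v' ++ x)

/-- `I` is a monomial admissible ideal of `kQ` : every element is a combination of
paths of length `≥ 2`, membership is detected on supports (monomiality), and `I`
is stable under concatenation with paths on either side. -/
def IsMonomialAdmissible (I : Submodule k (List Q.A →₀ k)) : Prop :=
  (∀ r ∈ I, ∀ p ∈ (r : List Q.A →₀ k).support, Q.IsPath p ∧ 2 ≤ p.length) ∧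
  (∀ r : List Q.A →₀ k, (∀ p ∈ r.support, Finsupp.single p (1 : k) ∈ I) → r ∈ I) ∧
  (∀ r ∈ I, ∀ p ∈ (r : List Q.A →₀ k).support, Finsupp.single p (1 : k) ∈ I) ∧
  (∀ p q : List Q.A, Q.IsPath p → Finsupp.single q (1 : k) ∈ I → Q.IsPath (p ++ q) →
    Finsupp.single (p ++ q) (1 : k) ∈ I) ∧
  (∀ p q : List Q.A, Finsupp.single p (1 : k) ∈ I → Q.IsPath q → Q.IsPath (p ++ q) →
    Finsupp.single (p ++ q) (1 : k) ∈ I)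

/-- A `k`-linear automorphism of `kQ` (fixing the vertices) is the transvection
`φ_{α,u,τ}` when its underlying linear map is `substMap α u τ`. -/
def IsTransvectionE (ψ : (List Q.A →₀ k) ≃ₗ[k] (List Q.A →₀ k))
    (α : Q.A) (u : List Q.A) (τ : k) : Prop :=
  (ψ : (List Q.A →₀ k) →ₗ[k] (List Q.A →₀ k)) = substMap Q k α u τ

/-- The subgroup `T_{<(α,u)}` generated by the transvections `φ_{β,v,τ}` with
`(β,v) < (α,u)`. -/
noncomputable def TltSub (o : Q.PathOrder) (b : Q.A × List Q.A) :
    Subgroup ((List Q.A →₀ k) ≃ₗ[k] (List Q.A →₀ k)) :=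
  Subgroup.closure
    {ψ | ∃ β v τ, Q.IsBypass β v ∧ o.bplt (β, v) b ∧ IsTransvectionE Q k ψ β v τ}

/-- The subgroup `T_{≤(α,u)}` generated by the transvections `φ_{β,v,τ}` with
`(β,v) ≤ (α,u)`. -/
noncomputable def TleSub (o : Q.PathOrder) (b : Q.A × List Q.A) :
    Subgroup ((List Q.A →₀ k) ≃ₗ[k] (List Q.A →₀ k)) :=
  Subgroup.closure
    {ψ | ∃ β v τ, Q.IsBypass β v ∧ o.bple (β, v) b ∧ IsTransvectionE Q k ψ β v τ}

/-- The set `T_{(α,u)} = {φ_{α,u,τ} | τ ∈ k}`. -/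
def TsingleSet (b : Q.A × List Q.A) :
    Set ((List Q.A →₀ k) ≃ₗ[k] (List Q.A →₀ k)) :=
  {ψ | ∃ τ : k, IsTransvectionE Q k ψ b.1 b.2 τ}

/-- `m` is the `<`-maximum of the support of `r`. -/
def IsMaxPath (o : Q.PathOrder) (r : List Q.A →₀ k) (m : List Q.A) : Prop :=
  m ∈ r.support ∧ ∀ p ∈ r.support, p ≠ m → o.lt p m

/-- `B` is the Gröbner basis of the subspace `F` with respect to the path order `o` :
`B` spans `F` and each `r ∈ B` has a leading path `m` (with coefficient `1`, all other
paths of `supp r` being `<`-smaller) whose coefficient in every other element of `B`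
vanishes. -/
def IsGB (o : Q.PathOrder) (F : Submodule k (List Q.A →₀ k))
    (B : Set (List Q.A →₀ k)) : Prop :=
  B ⊆ (F : Set (List Q.A →₀ k)) ∧ Submodule.span k B = F ∧
  ∀ r ∈ B, ∃ m, m ∈ (r : List Q.A →₀ k).support ∧ r m = 1 ∧
    (∀ p ∈ (r : List Q.A →₀ k).support, p ≠ m → o.lt p m) ∧
    ∀ r' ∈ B, r' ≠ r → (r' : List Q.A →₀ k) m = 0

end Linear

section Aux

variable {Q : Quiv} {k : Type} [Field k]

/-! ### Multiplication bridge to `MonoidAlgebra` -/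

local notation "FM" => MonoidAlgebra k (FreeMonoid Q.A)

noncomputable def mulMA (f g : List Q.A →₀ k) : List Q.A →₀ k :=
  (MonoidAlgebra.ofCoeff (R := k) (M := FreeMonoid Q.A) f *
    MonoidAlgebra.ofCoeff (R := k) (M := FreeMonoid Q.A) g).coeff

theorem mulF_eq_mulMA (f g : List Q.A →₀ k) : mulF Q k f g = mulMA f g := by
  have h := @MonoidAlgebra.mul_def k (FreeMonoid Q.A) _ _ (MonoidAlgebra.ofCoeff f)
    (MonoidAlgebra.ofCoeff g)
  rw [mulMA, h, MonoidAlgebra.coeff_finsuppSum]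
  apply Finsupp.sum_congr
  intro p _
  rw [MonoidAlgebra.coeff_finsuppSum]
  rfl

theorem mulMA_single_single (p q : List Q.A) (c d : k) :
    mulMA (Finsupp.single p c) (Finsupp.single q d) = Finsupp.single (p ++ q) (c * d) :=
  congrArg MonoidAlgebra.coeff (@MonoidAlgebra.single_mul_single k (FreeMonoid Q.A) _ _ p q c d)

theorem mulMA_assoc (f g h : List Q.A →₀ k) :
    mulMA (mulMA f g) h = mulMA f (mulMA g h) :=
  congrArg MonoidAlgebra.coeff (@mul_assoc FM _ (.ofCoeff f) (.ofCoeff g) (.ofCoeff h))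

theorem mulMA_add_left (f f' g : List Q.A →₀ k) :
    mulMA (f + f') g = mulMA f g + mulMA f' g :=
  congrArg MonoidAlgebra.coeff (@add_mul FM _ _ _ (.ofCoeff f) (.ofCoeff f') (.ofCoeff g))

theorem mulMA_add_right (f g g' : List Q.A →₀ k) :
    mulMA f (g + g') = mulMA f g + mulMA f g' :=
  congrArg MonoidAlgebra.coeff (@mul_add FM _ _ _ (.ofCoeff f) (.ofCoeff g) (.ofCoeff g'))

theorem mulMA_smul_left (c : k) (f g : List Q.A →₀ k) :
    mulMA (c • f) g = c • mulMA f g :=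
  congrArg MonoidAlgebra.coeff (@smul_mul_assoc k FM _ _ _ c (.ofCoeff f) (.ofCoeff g))

theorem mulMA_smul_right (c : k) (f g : List Q.A →₀ k) :
    mulMA f (c • g) = c • mulMA f g :=
  congrArg MonoidAlgebra.coeff (@mul_smul_comm k FM _ _ _ c (.ofCoeff f) (.ofCoeff g))

theorem mulMA_zero_left (g : List Q.A →₀ k) : mulMA 0 g = 0 :=
  congrArg MonoidAlgebra.coeff (@zero_mul FM _ (.ofCoeff g))

theorem mulMA_zero_right (f : List Q.A →₀ k) : mulMA f 0 = 0 :=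
  congrArg MonoidAlgebra.coeff (@mul_zero FM _ (.ofCoeff f))

theorem mulMA_one_left (g : List Q.A →₀ k) : mulMA (Finsupp.single [] 1) g = g :=
  congrArg MonoidAlgebra.coeff (@one_mul FM _ (.ofCoeff g))

theorem mulMA_one_right (f : List Q.A →₀ k) : mulMA f (Finsupp.single [] 1) = f :=
  congrArg MonoidAlgebra.coeff (@mul_one FM _ (.ofCoeff f))

theorem mulMA_support (f g : List Q.A →₀ k) (p : List Q.A) (hp : p ∈ (mulMA f g).support) :
    ∃ a ∈ f.support, ∃ b ∈ g.support, p = a ++ b := by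
  have h2 := @MonoidAlgebra.support_coeff_mul_subset k (FreeMonoid Q.A) _ _ _
    (.ofCoeff f) (.ofCoeff g)
  unfold mulMA at hp
  have h3 := h2 hp
  replace h3 := Finset.mem_mul.mp h3
  obtain ⟨a, ha, b, hb, h⟩ := h3
  exact ⟨a, ha, b, hb, h.symm⟩

end Aux
section Paths

variable {Q : Quiv}

theorem isPath_singleton (a : Q.A) : Q.IsPath [a] :=
  ⟨List.cons_ne_nil _ _, List.isChain_singleton a⟩

theorem src_cons (a : Q.A) (l : List Q.A) : Q.src (a :: l) = some (Q.s a) := rfl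

theorem tgt_concat (l : List Q.A) (a : Q.A) : Q.tgt (l ++ [a]) = some (Q.t a) := by
  simp [Quiv.tgt]

theorem tgt_singleton (a : Q.A) : Q.tgt [a] = some (Q.t a) := rfl

theorem src_append {x : List Q.A} (y : List Q.A) (h : x ≠ []) :
    Q.src (x ++ y) = Q.src x := by
  cases x with
  | nil => exact absurd rfl h
  | cons a l => rfl

theorem tgt_append (x : List Q.A) {y : List Q.A} (h : y ≠ []) :
    Q.tgt (x ++ y) = Q.tgt y := by
  unfold Quiv.tgt
  rw [List.getLast?_append_of_ne_nil _ h]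

theorem isPath_append {x y : List Q.A} (hx : Q.IsPath x) (hy : Q.IsPath y)
    (h : Q.tgt x = Q.src y) : Q.IsPath (x ++ y) := by
  refine ⟨by simp [hx.1], List.isChain_append.mpr ⟨hx.2, hy.2, ?_⟩⟩
  intro a ha b hb
  unfold Quiv.tgt Quiv.src at h
  rw [ha, hb] at h
  simpa using h

theorem chain'_boundary {x y : List Q.A}
    (hc : (x ++ y).Chain' (fun a b => Q.t a = Q.s b)) (hx : x ≠ []) (hy : y ≠ []) :
    Q.tgt x = Q.src y := by
  have h := (List.isChain_append.mp hc).2.2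
  obtain ⟨a, ha⟩ := Option.isSome_iff_exists.mp (List.getLast?_isSome.mpr hx)
  obtain ⟨b, hb⟩ := Option.isSome_iff_exists.mp (List.isSome_head?.mpr hy)
  unfold Quiv.tgt Quiv.src
  rw [ha, hb]
  simpa using h a ha b hb

theorem isPath_of_infix {l l' : List Q.A} (hl : Q.IsPath l) (h : l' <:+: l) (h' : l' ≠ []) :
    Q.IsPath l' := ⟨h', hl.2.infix h⟩

theorem isPath_tail {a : Q.A} {l : List Q.A} (h : Q.IsPath (a :: l)) (hl : l ≠ []) :
    Q.IsPath l :=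
  ⟨hl, h.2.tail⟩

theorem Wp_nil : Q.Wp [] = 0 := rfl

theorem Wp_append (x y : List Q.A) : Q.Wp (x ++ y) = Q.Wp x + Q.Wp y := by
  unfold Quiv.Wp
  rw [List.map_append, List.sum_append]

theorem Wp_singleton (a : Q.A) : Q.Wp [a] = Q.Wa a := by
  unfold Quiv.Wp
  simp

theorem Wp_cons (a : Q.A) (l : List Q.A) : Q.Wp (a :: l) = Q.Wa a + Q.Wp l := by
  unfold Quiv.Wp
  simp

theorem not_duplicate_path (hnc : Q.NoCycle) {x : Q.A} {p : List Q.A} (hx : List.Duplicate x p)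
    (hp : Q.IsPath p) : False := by
  induction hx with
  | cons_mem hm =>
    rename_i l
    obtain ⟨s₁, s₂, rfl⟩ := List.append_of_mem hm
    -- p = x :: s₁ ++ x :: s₂
    have hq : Q.IsPath (s₁ ++ [x]) := by
      refine isPath_of_infix hp ⟨[x], s₂, ?_⟩ (by simp)
      simp
    cases s₁ with
    | nil =>
      have hrel : Q.t x = Q.s x := by
        have h2 := hp.2
        simp only [List.nil_append, List.isChain_cons_cons] at h2
        exact (List.isChain_cons_cons.mp h2).1
      exact hnc _ hq (by simp [Quiv.src, Quiv.tgt, hrel])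
    | cons a s₁' =>
      have hbd : Q.tgt [x] = Q.src ((a :: s₁') ++ (x :: s₂)) := by
        have hc : ([x] ++ ((a :: s₁') ++ (x :: s₂))).Chain' (fun a b => Q.t a = Q.s b) := by
          simpa using hp.2
        exact chain'_boundary hc (by simp) (by simp)
      have hsrc : Q.src ((a :: s₁') ++ [x]) = some (Q.t x) := by
        rw [src_append _ (by simp)]
        rw [src_append _ (by simp)] at hbd
        simpa [Quiv.src, Quiv.tgt] using hbd.symm
      exact hnc _ hq (by rw [hsrc, tgt_concat])
  | cons_duplicate hd ih =>
    exact ih (isPath_tail hp (List.ne_nil_of_mem hd.mem))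

/-- A path never visits the same arrow twice. -/
theorem path_nodup (hnc : Q.NoCycle) {p : List Q.A} (hp : Q.IsPath p) : p.Nodup := by
  by_contra h
  obtain ⟨x, hx⟩ := List.exists_duplicate_iff_not_nodup.mpr h
  exact not_duplicate_path hnc hx hp

/-- The set of paths of an acyclic quiver with finitely many arrows is finite. -/
theorem finite_paths [Fintype Q.A] (hnc : Q.NoCycle) : {p : List Q.A | Q.IsPath p}.Finite := by
  apply (List.finite_length_le Q.A (Fintype.card Q.A)).subset
  intro p hp
  exact (path_nodup hnc hp).length_le_card

/-- An arrow does not occur in any path parallel to it. -/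
theorem arrow_not_mem_bypass (hnc : Q.NoCycle) {γ : Q.A} {v : List Q.A}
    (h : Q.IsBypass γ v) : γ ∉ v := by
  intro hm
  obtain ⟨s₁, s₂, rfl⟩ := List.append_of_mem hm
  obtain ⟨hv, hsrc, htgt, hne⟩ := h
  cases s₁ with
  | nil =>
    cases s₂ with
    | nil => exact hne rfl
    | cons b s₂' =>
      have hq : Q.IsPath (b :: s₂') := isPath_tail hv (by simp)
      have hbd : Q.tgt [γ] = Q.src (b :: s₂') := by
        have hc : ([γ] ++ (b :: s₂')).Chain' (fun a b => Q.t a = Q.s b) := by simpa using hv.2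
        exact chain'_boundary hc (by simp) (by simp)
      have htgt' : Q.tgt (b :: s₂') = some (Q.t γ) := by
        rw [← tgt_append [γ] (y := b :: s₂') (by simp)]
        simpa using htgt
      exact hnc _ hq (by rw [← hbd, htgt', tgt_singleton])
  | cons a s₁' =>
    have hq : Q.IsPath (a :: s₁') := isPath_of_infix hv ⟨[], γ :: s₂, by simp⟩ (by simp)
    have hbd : Q.tgt (a :: s₁') = Q.src (γ :: s₂) :=
      chain'_boundary hv.2 (by simp) (by simp)
    have hsrc' : Q.src (a :: s₁') = some (Q.s γ) := by
      rw [← src_append (γ :: s₂) (x := a :: s₁') (by simp)]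
      exact hsrc
    exact hnc _ hq (by rw [hbd, hsrc', src_cons])

end Paths
section LeMeur

variable {Q : Quiv} [Fintype Q.A]

theorem finite_bypass_set (hnc : Q.NoCycle) (P : Q.A × List Q.A → Prop) :
    {x : Q.A × List Q.A | Q.IsBypass x.1 x.2 ∧ P x}.Finite := by
  apply (Set.finite_univ.prod (finite_paths hnc)).subset
  rintro ⟨γ, w⟩ ⟨hb, -⟩
  exact ⟨trivial, hb.1⟩

theorem finite_bypass (hnc : Q.NoCycle) (γ : Q.A) (P : List Q.A → Prop) :
    {w : List Q.A | Q.IsBypass γ w ∧ P w}.Finite := by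
  apply (finite_paths hnc).subset
  rintro w ⟨hb, -⟩
  exact hb.1

theorem finite_bypass' (hnc : Q.NoCycle) (γ : Q.A) :
    {w : List Q.A | Q.IsBypass γ w}.Finite := by
  apply (finite_paths hnc).subset
  rintro w hb
  exact hb.1

/-- Le Meur's key inequality: `W(v) < W(γ)` for any bypass `(γ, v)`. -/
theorem wp_lt_wa (hnc : Q.NoCycle) (hnm : Q.NoMultipleArrows) {γ : Q.A} {v : List Q.A}
    (h : Q.IsBypass γ v) : Q.Wp v < Q.Wa γ := by
  have main : ∀ y x : List Q.A, v = x ++ y →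
      Q.Wp y < Nat.card {w : List Q.A // Q.IsBypass γ w ∧ x <+: w} := by
    intro y
    induction y with
    | nil =>
      intro x hx
      rw [List.append_nil] at hx
      subst hx
      haveI : Finite {w : List Q.A // Q.IsBypass γ w ∧ v <+: w} :=
        (finite_bypass hnc γ _).to_subtype
      haveI : Nonempty {w : List Q.A // Q.IsBypass γ w ∧ v <+: w} :=
        ⟨⟨v, h, List.prefix_refl v⟩⟩
      have h0 : Q.Wp [] = 0 := rfl
      rw [h0]
      exact Nat.card_pos
    | cons a y' ih =>
      intro x hx
      haveI F1 : Finite {w : List Q.A // Q.IsBypass γ w ∧ x <+: w} :=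
        (finite_bypass hnc γ _).to_subtype
      haveI F2 : Finite {w : List Q.A // Q.IsBypass γ w ∧ (x ++ [a]) <+: w} :=
        (finite_bypass hnc γ _).to_subtype
      haveI F3 : Finite {w : List Q.A // Q.IsBypass a w} :=
        (finite_bypass' hnc a).to_subtype
      have hv' : v = (x ++ [a]) ++ y' := by rw [hx]; simp
      have ihx := ih (x ++ [a]) hv'
      -- facts about the decomposition
      have hvpath := h.1
      have hxay : Q.IsPath (x ++ a :: y') := hx ▸ hvpath
      -- boundary facts
      have hbd1 : x ≠ [] → Q.tgt x = some (Q.s a) := by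
        intro hxe
        have := chain'_boundary (x := x) (y := a :: y') (hxay.2) hxe (by simp)
        rw [this]; rfl
      have hbd2 : y' ≠ [] → some (Q.t a) = Q.src y' := by
        intro hye
        have hc : ((x ++ [a]) ++ y').Chain' (fun a b => Q.t a = Q.s b) := by
          rw [← hv']; exact hvpath.2
        have := chain'_boundary hc (by simp) hye
        rw [← this, tgt_concat]
      -- the injection
      have key : ∀ w : List Q.A, Q.IsBypass a w →
          Q.IsBypass γ (x ++ (w ++ y')) ∧ ¬ ((x ++ [a]) <+: (x ++ (w ++ y'))) := by
        intro w hw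
        have hwne : w ≠ [] := hw.1.1
        have hnpre : ¬ ((x ++ [a]) <+: (x ++ (w ++ y'))) := by
          rw [List.prefix_append_right_inj]
          intro hpre
          have hhead : (w ++ y').head? = some a := by
            cases hpre with
            | intro r hr => rw [← hr]; cases w with
              | nil => exact absurd rfl hwne
              | cons b w' => simp
          have : a ∈ w := by
            cases w with
            | nil => exact absurd rfl hwne
            | cons b w' => simp at hhead; simp [hhead]
          exact arrow_not_mem_bypass hnc hw this
        refine ⟨⟨?_, ?_, ?_, ?_⟩, hnpre⟩
        · -- path
          have hwy : Q.IsPath (w ++ y') := by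
            cases Classical.em (y' = []) with
            | inl he => rw [he, List.append_nil]; exact hw.1
            | inr he =>
              refine isPath_append hw.1 (isPath_of_infix hxay ⟨x ++ [a], [], by simp⟩ he) ?_
              rw [hw.2.2.1, hbd2 he]
          cases Classical.em (x = []) with
          | inl he => rw [he, List.nil_append]; exact hwy
          | inr he =>
            refine isPath_append (isPath_of_infix hxay ⟨[], a :: y', by simp⟩ he) hwy ?_
            rw [hbd1 he, src_append _ hwne, hw.2.1]
        · -- src
          cases Classical.em (x = []) with
          | inl he =>
            subst he
            rw [List.nil_append, src_append _ hwne, hw.2.1]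
            have := h.2.1
            rw [hx, List.nil_append, src_cons] at this
            exact this
          | inr he =>
            rw [src_append _ he, ← src_append (a :: y') he, ← hx]
            exact h.2.1
        · -- tgt
          cases Classical.em (y' = []) with
          | inl he =>
            subst he
            have h3 : Q.tgt (x ++ [a]) = some (Q.t γ) := by
              have h4 := h.2.2.1
              rw [hx] at h4
              exact h4
            rw [tgt_concat] at h3
            rw [List.append_nil, tgt_append x hwne, hw.2.2.1]
            exact h3
          | inr he =>
            have h3 : Q.tgt y' = some (Q.t γ) := by
              have h4 := h.2.2.1
              rw [hx, tgt_append x (by simp),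
                show (a :: y') = [a] ++ y' from rfl, tgt_append [a] he] at h4
              exact h4
            rw [tgt_append x (by simp [he] : w ++ y' ≠ []), tgt_append w he]
            exact h3
        · -- ≠ [γ]
          intro heq
          have hlen : x.length + (w.length + y'.length) = 1 := by
            have h6 := congrArg List.length heq
            simp only [List.length_append, List.length_singleton] at h6
            exact h6
          have hwpos : 0 < w.length := List.length_pos_iff.mpr hwne
          have hx0 : x.length = 0 := by omega
          have hy0 : y'.length = 0 := by omega
          rw [List.length_eq_zero_iff] at hx0 hy0
          subst hx0; subst hy0
          -- v = [a], w = [γ]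
          simp only [List.nil_append, List.append_nil] at heq
          subst heq
          have hsa : Q.s γ = Q.s a := by
            have h5 := hw.2.1; simp [Quiv.src] at h5; exact h5
          have hta : Q.t γ = Q.t a := by
            have h5 := hw.2.2.1; simp [Quiv.tgt] at h5; exact h5
          have : γ = a := hnm γ a hsa hta
          subst this
          exact hw.2.2.2 rfl
      -- build injective function
      set T1 := {w : List Q.A // Q.IsBypass a w} with hT1
      set T2 := {w : List Q.A // Q.IsBypass γ w ∧ (x ++ [a]) <+: w} with hT2
      set T0 := {w : List Q.A // Q.IsBypass γ w ∧ x <+: w} with hT0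
      let F : T1 ⊕ T2 → T0 := fun z =>
        match z with
        | Sum.inl ⟨w, hw⟩ => ⟨x ++ (w ++ y'), (key w hw).1, List.prefix_append x _⟩
        | Sum.inr ⟨w, hw⟩ => ⟨w, hw.1, ((List.prefix_append x [a]).trans hw.2)⟩
      have hinj : Function.Injective F := by
        rintro (⟨w1, hw1⟩ | ⟨w1, hw1⟩) (⟨w2, hw2⟩ | ⟨w2, hw2⟩) hF
        · have : x ++ (w1 ++ y') = x ++ (w2 ++ y') := congrArg Subtype.val hF
          have h1 := List.append_cancel_left this
          have h2 := List.append_cancel_right h1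
          simp [h2]
        · exfalso
          have : x ++ (w1 ++ y') = w2 := congrArg Subtype.val hF
          exact (key w1 hw1).2 (this ▸ hw2.2)
        · exfalso
          have : w1 = x ++ (w2 ++ y') := congrArg Subtype.val hF
          exact (key w2 hw2).2 (this ▸ hw1.2)
        · have : w1 = w2 := congrArg Subtype.val hF
          simp [this]
      have hcard := Nat.card_le_card_of_injective F hinj
      rw [Nat.card_sum] at hcard
      have hwa : Nat.card T1 = Q.Wa a := by rw [Quiv.Wa]
      rw [hwa] at hcard
      rw [Wp_cons]
      omega
  have h0 := main v [] (by simp)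
  rw [Quiv.Wa]
  have : Nat.card {w : List Q.A // Q.IsBypass γ w ∧ [] <+: w}
      = Nat.card {u : List Q.A // Q.IsBypass γ u} :=
    Nat.card_congr (Equiv.subtypeEquivRight (by simp))
  omega

end LeMeur
section OrderLemmas

variable {Q : Quiv} {o : Q.PathOrder}

theorem lt_wp_le {p q : List Q.A} (hp : Q.IsPath p) (hq : Q.IsPath q)
    (h : o.lt p q) : Q.Wp p ≤ Q.Wp q := by
  by_contra hc
  push_neg at hc
  exact o.irrefl p hp (o.trans' _ _ _ h (o.wlt q p hq hp hc))

theorem bplt_trans {b c d : Q.A × List Q.A} (h1 : o.bplt b c) (h2 : o.bplt c d) :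
    o.bplt b d := by
  rcases h1 with h1 | ⟨e1, h1⟩ <;> rcases h2 with h2 | ⟨e2, h2⟩
  · exact Or.inl (o.trans' _ _ _ h1 h2)
  · exact Or.inl (e2 ▸ h1)
  · exact Or.inl (e1 ▸ h2)
  · exact Or.inr ⟨e1.trans e2, o.trans' _ _ _ h1 h2⟩

theorem bple_refl (b : Q.A × List Q.A) : o.bple b b := Or.inr rfl

theorem bple_trans {b c d : Q.A × List Q.A} (h1 : o.bple b c) (h2 : o.bple c d) :
    o.bple b d := by
  rcases h1 with h1 | rfl
  · rcases h2 with h2 | rfl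
    · exact Or.inl (bplt_trans h1 h2)
    · exact Or.inl h1
  · exact h2

theorem bplt_of_bplt_of_bple {b c d : Q.A × List Q.A} (h1 : o.bplt b c) (h2 : o.bple c d) :
    o.bplt b d := by
  rcases h2 with h2 | rfl
  · exact bplt_trans h1 h2
  · exact h1

theorem bplt_of_bple_of_bplt {b c d : Q.A × List Q.A} (h1 : o.bple b c) (h2 : o.bplt c d) :
    o.bplt b d := by
  rcases h1 with h1 | rfl
  · exact bplt_trans h1 h2
  · exact h2

theorem bplt_irrefl {b : Q.A × List Q.A} (hb : Q.IsPath b.2) (h : o.bplt b b) : False := by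
  rcases h with h | ⟨-, h⟩
  · exact o.irrefl _ (isPath_singleton b.1) h
  · exact o.irrefl _ hb h

theorem bplt_trichotomy {b c : Q.A × List Q.A} (hb : Q.IsBypass b.1 b.2)
    (hc : Q.IsBypass c.1 c.2) : o.bplt b c ∨ b = c ∨ o.bplt c b := by
  by_cases h1 : b.1 = c.1
  · by_cases h2 : b.2 = c.2
    · exact Or.inr (Or.inl (Prod.ext h1 h2))
    · rcases o.total' b.2 c.2 hb.1 hc.1 h2 with h | h
      · exact Or.inl (Or.inr ⟨h1, h⟩)
      · exact Or.inr (Or.inr (Or.inr ⟨h1.symm, h⟩))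
  · have hne : [b.1] ≠ [c.1] := by simpa using h1
    rcases o.total' [b.1] [c.1] (isPath_singleton _) (isPath_singleton _) hne with h | h
    · exact Or.inl (Or.inl h)
    · exact Or.inr (Or.inr (Or.inl h))

theorem bplt_of_wp_lt (γ : Q.A) {w' w : List Q.A} (h1 : Q.IsPath w') (h2 : Q.IsPath w)
    (hlt : Q.Wp w' < Q.Wp w) : o.bplt (γ, w') (γ, w) :=
  Or.inr ⟨rfl, o.wlt w' w h1 h2 hlt⟩

theorem lt_of_bplt_same {γ : Q.A} {w' w : List Q.A} (h : o.bplt (γ, w') (γ, w)) :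
    o.lt w' w := by
  rcases h with h | ⟨-, h⟩
  · exact absurd h (o.irrefl _ (isPath_singleton γ))
  · exact h

theorem wp_le_of_bple_same {γ : Q.A} {w' w : List Q.A} (hw' : Q.IsPath w')
    (hw : Q.IsPath w) (h : o.bple (γ, w') (γ, w)) : Q.Wp w' ≤ Q.Wp w := by
  rcases h with h | h
  · exact lt_wp_le hw' hw (lt_of_bplt_same h)
  · exact le_of_eq (congrArg Q.Wp (congrArg Prod.snd h))

theorem exists_bple_max (o : Q.PathOrder) (S : Set (Q.A × List Q.A)) (hfin : S.Finite)
    (hne : S.Nonempty) (hby : ∀ z ∈ S, Q.IsBypass z.1 z.2) :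
    ∃ m ∈ S, ∀ z ∈ S, o.bple z m := by
  have key : ∀ s : Finset (Q.A × List Q.A), s.Nonempty → (∀ z ∈ s, Q.IsBypass z.1 z.2) →
      ∃ m ∈ s, ∀ z ∈ s, o.bple z m := by
    intro s
    induction s using Finset.induction_on with
    | empty => intro h; exact absurd h (by simp)
    | insert _ _ hnotmem =>
      rename_i a s ih
      intro _ hby'
      by_cases hs : s.Nonempty
      · obtain ⟨m, hm, hmax⟩ := ih hs (fun z hz => hby' z (Finset.mem_insert_of_mem hz))
        rcases bplt_trichotomy (hby' a (Finset.mem_insert_self a s)) (hby' m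
          (Finset.mem_insert_of_mem hm)) with h | h | h
        · refine ⟨m, Finset.mem_insert_of_mem hm, ?_⟩
          intro z hz
          rcases Finset.mem_insert.mp hz with rfl | hz
          · exact Or.inl h
          · exact hmax z hz
        · refine ⟨m, Finset.mem_insert_of_mem hm, ?_⟩
          intro z hz
          rcases Finset.mem_insert.mp hz with rfl | hz
          · exact Or.inr h
          · exact hmax z hz
        · refine ⟨a, Finset.mem_insert_self a s, ?_⟩
          intro z hz
          rcases Finset.mem_insert.mp hz with rfl | hz
          · exact bple_refl z
          · exact Or.inl (bplt_of_bple_of_bplt (hmax z hz) h)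
      · rw [Finset.not_nonempty_iff_eq_empty] at hs
        subst hs
        refine ⟨a, Finset.mem_insert_self a _, ?_⟩
        intro z hz
        rcases Finset.mem_insert.mp hz with rfl | hz
        · exact bple_refl z
        · exact absurd hz (by simp)
  obtain ⟨m, hm, hmax⟩ := key hfin.toFinset (by rwa [Set.Finite.toFinset_nonempty])
    (fun z hz => hby z (hfin.mem_toFinset.mp hz))
  exact ⟨m, hfin.mem_toFinset.mp hm, fun z hz => hmax z (hfin.mem_toFinset.mpr hz)⟩

end OrderLemmas
section Subst

variable {Q : Quiv} {k : Type} [Field k]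

theorem substPoly_nil (α : Q.A) (u : List Q.A) (τ : k) :
    substPoly Q k α u τ [] = Finsupp.single [] 1 := rfl

theorem substPoly_cons (α : Q.A) (u : List Q.A) (τ : k) (a : Q.A) (p : List Q.A) :
    substPoly Q k α u τ (a :: p) = mulMA (arrowImg Q k α u τ a) (substPoly Q k α u τ p) := by
  rw [substPoly, mulF_eq_mulMA]

theorem arrowImg_ne (α : Q.A) (u : List Q.A) (τ : k) {a : Q.A} (h : a ≠ α) :
    arrowImg Q k α u τ a = Finsupp.single [a] 1 := if_neg h

theorem arrowImg_self (α : Q.A) (u : List Q.A) (τ : k) :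
    arrowImg Q k α u τ α = Finsupp.single [α] 1 + τ • Finsupp.single u 1 := if_pos rfl

theorem substPoly_singleton (α : Q.A) (u : List Q.A) (τ : k) (a : Q.A) :
    substPoly Q k α u τ [a] = arrowImg Q k α u τ a := by
  rw [substPoly_cons, substPoly_nil, mulMA_one_right]

theorem substPoly_append (α : Q.A) (u : List Q.A) (τ : k) (p q : List Q.A) :
    substPoly Q k α u τ (p ++ q) = mulMA (substPoly Q k α u τ p) (substPoly Q k α u τ q) := by
  induction p with
  | nil => rw [List.nil_append, substPoly_nil, mulMA_one_left]
  | cons a p' ih =>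
    rw [List.cons_append, substPoly_cons, ih, substPoly_cons, mulMA_assoc]

theorem substMap_single (α : Q.A) (u : List Q.A) (τ : k) (p : List Q.A) (c : k) :
    substMap Q k α u τ (Finsupp.single p c) = c • substPoly Q k α u τ p := by
  rw [substMap, Finsupp.linearCombination_single]

/-- A linear endomorphism of `kQ` is multiplicative. -/
def IsMult (f : (List Q.A →₀ k) →ₗ[k] (List Q.A →₀ k)) : Prop :=
  ∀ x y, f (mulMA x y) = mulMA (f x) (f y)

theorem isMult_id : IsMult (LinearMap.id : (List Q.A →₀ k) →ₗ[k] (List Q.A →₀ k)) :=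
  fun _ _ => rfl

theorem isMult_comp {f g : (List Q.A →₀ k) →ₗ[k] (List Q.A →₀ k)}
    (hf : IsMult f) (hg : IsMult g) : IsMult (f ∘ₗ g) := by
  intro x y
  rw [LinearMap.comp_apply, LinearMap.comp_apply, LinearMap.comp_apply, hg, hf]

theorem isMult_substMap (α : Q.A) (u : List Q.A) (τ : k) :
    IsMult (substMap Q k α u τ) := by
  intro x y
  induction x using Finsupp.induction_linear with
  | zero => rw [mulMA_zero_left, map_zero, mulMA_zero_left]
  | add f g hf hg => rw [mulMA_add_left, map_add, map_add, hf, hg, mulMA_add_left]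
  | single p c =>
    induction y using Finsupp.induction_linear with
    | zero => rw [mulMA_zero_right, map_zero, mulMA_zero_right]
    | add f g hf hg => rw [mulMA_add_right, map_add, map_add, hf, hg, mulMA_add_right]
    | single q d =>
      rw [mulMA_single_single, substMap_single, substMap_single, substMap_single,
        substPoly_append, mulMA_smul_left, mulMA_smul_right, smul_smul, mul_smul]

theorem substMap_arrow_ne (α : Q.A) (u : List Q.A) (τ : k) {a : Q.A} (h : a ≠ α) :
    substMap Q k α u τ (Finsupp.single [a] 1) = Finsupp.single [a] 1 := by
  rw [substMap_single, substPoly_singleton, arrowImg_ne _ _ _ h, one_smul]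

theorem substMap_arrow_self (α : Q.A) (u : List Q.A) (τ : k) :
    substMap Q k α u τ (Finsupp.single [α] 1)
      = Finsupp.single [α] 1 + τ • Finsupp.single u 1 := by
  rw [substMap_single, substPoly_singleton, arrowImg_self, one_smul]

theorem substMap_one (α : Q.A) (u : List Q.A) (τ : k) :
    substMap Q k α u τ (Finsupp.single [] 1) = Finsupp.single [] 1 := by
  rw [substMap_single, substPoly_nil, one_smul]

theorem substPoly_not_mem {α : Q.A} (u : List Q.A) (τ : k) {p : List Q.A} (h : α ∉ p) :
    substPoly Q k α u τ p = Finsupp.single p 1 := by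
  induction p with
  | nil => rfl
  | cons a p' ih =>
    have ha : a ≠ α := fun he => h (he ▸ List.mem_cons_self)
    have hp' : α ∉ p' := fun hm => h (List.mem_cons_of_mem a hm)
    rw [substPoly_cons, arrowImg_ne _ _ _ ha, ih hp', mulMA_single_single, one_mul]
    rfl

theorem substMap_not_mem {α : Q.A} (u : List Q.A) (τ : k) {p : List Q.A} (h : α ∉ p) :
    substMap Q k α u τ (Finsupp.single p 1) = Finsupp.single p 1 := by
  rw [substMap_single, substPoly_not_mem u τ h, one_smul]

/-- Two multiplicative linear maps agreeing on trivial path and arrows agree. -/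
theorem mult_ext {f g : (List Q.A →₀ k) →ₗ[k] (List Q.A →₀ k)}
    (hf : IsMult f) (hg : IsMult g) (h1 : f (Finsupp.single [] 1) = g (Finsupp.single [] 1))
    (h2 : ∀ a : Q.A, f (Finsupp.single [a] 1) = g (Finsupp.single [a] 1)) : f = g := by
  have key : ∀ p : List Q.A, f (Finsupp.single p 1) = g (Finsupp.single p 1) := by
    intro p
    induction p with
    | nil => exact h1
    | cons a p' ih =>
      have hsplit : (Finsupp.single (a :: p') (1:k)) =
          mulMA (Finsupp.single [a] (1:k)) (Finsupp.single p' (1:k)) := by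
        rw [mulMA_single_single, one_mul]
        rfl
      rw [hsplit, hf, hg, h2, ih]
  apply Finsupp.lhom_ext
  intro p c
  have : (Finsupp.single p c) = c • Finsupp.single p (1:k) := by
    rw [Finsupp.smul_single, smul_eq_mul, mul_one]
  rw [this, map_smul, map_smul, key]

theorem substMap_comp_same {α : Q.A} {u : List Q.A} (h : α ∉ u) (τ σ : k) :
    (substMap Q k α u τ) ∘ₗ (substMap Q k α u σ) = substMap Q k α u (σ + τ) := by
  apply mult_ext (isMult_comp (isMult_substMap α u τ) (isMult_substMap α u σ))
    (isMult_substMap α u (σ + τ))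
  · rw [LinearMap.comp_apply, substMap_one, substMap_one, substMap_one]
  · intro a
    by_cases ha : a = α
    · subst ha
      rw [LinearMap.comp_apply, substMap_arrow_self, map_add, substMap_arrow_self,
        map_smul, substMap_not_mem u τ h, substMap_arrow_self, add_assoc, ← add_smul,
        add_comm τ σ]
    · rw [LinearMap.comp_apply, substMap_arrow_ne _ _ _ ha, substMap_arrow_ne _ _ _ ha,
        substMap_arrow_ne _ _ _ ha]

theorem substMap_zero_eq_id (α : Q.A) (u : List Q.A) :
    substMap Q k α u 0 = (LinearMap.id : (List Q.A →₀ k) →ₗ[k] (List Q.A →₀ k)) := by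
  have hsp : ∀ p : List Q.A, substPoly Q k α u (0:k) p = Finsupp.single p 1 := by
    intro p
    induction p with
    | nil => rfl
    | cons a p' ih =>
      have himg : arrowImg Q k α u (0:k) a = Finsupp.single [a] 1 := by
        unfold arrowImg
        split <;> simp
      rw [substPoly_cons, himg, ih, mulMA_single_single, one_mul]
      rfl
  apply Finsupp.lhom_ext
  intro p c
  rw [substMap_single, hsp, LinearMap.id_apply, Finsupp.smul_single, smul_eq_mul, mul_one]

/-- Deviation of an endomorphism at an arrow. -/
noncomputable def dev (f : (List Q.A →₀ k) →ₗ[k] (List Q.A →₀ k)) (γ : Q.A) :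
    List Q.A →₀ k :=
  f (Finsupp.single [γ] 1) - Finsupp.single [γ] 1

theorem apply_arrow_eq (f : (List Q.A →₀ k) →ₗ[k] (List Q.A →₀ k)) (γ : Q.A) :
    f (Finsupp.single [γ] 1) = Finsupp.single [γ] 1 + dev f γ := by
  rw [dev, add_sub_cancel]

theorem dev_id (γ : Q.A) :
    dev (LinearMap.id : (List Q.A →₀ k) →ₗ[k] (List Q.A →₀ k)) γ = 0 := by
  rw [dev, LinearMap.id_apply, sub_self]

theorem dev_comp (f g : (List Q.A →₀ k) →ₗ[k] (List Q.A →₀ k)) (γ : Q.A) :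
    dev (f ∘ₗ g) γ = dev f γ + f (dev g γ) := by
  rw [dev, dev, LinearMap.comp_apply, apply_arrow_eq g γ, map_add]
  abel

theorem dev_substMap_self (α : Q.A) (u : List Q.A) (τ : k) :
    dev (substMap Q k α u τ) α = τ • Finsupp.single u 1 := by
  rw [dev, substMap_arrow_self, add_sub_cancel_left]

theorem dev_substMap_ne (α : Q.A) (u : List Q.A) (τ : k) {γ : Q.A} (h : γ ≠ α) :
    dev (substMap Q k α u τ) γ = 0 := by
  rw [dev, substMap_arrow_ne _ _ _ h, sub_self]

theorem support_image {f : (List Q.A →₀ k) →ₗ[k] (List Q.A →₀ k)} {r : List Q.A →₀ k}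
    {p : List Q.A} (hp : p ∈ (f r).support) :
    ∃ w ∈ r.support, p ∈ (f (Finsupp.single w (1:k))).support := by
  have hr : f r = r.sum fun w c => c • f (Finsupp.single w 1) := by
    conv_lhs => rw [← Finsupp.sum_single r, map_finsuppSum]
    apply Finsupp.sum_congr
    intro w hw
    rw [← map_smul, Finsupp.smul_single, smul_eq_mul, mul_one]
  rw [hr] at hp
  have := Finsupp.support_sum hp
  rw [Finset.mem_biUnion] at this
  obtain ⟨w, hw, hmem⟩ := this
  exact ⟨w, hw, Finsupp.support_smul hmem⟩

theorem support_image_sub {f : (List Q.A →₀ k) →ₗ[k] (List Q.A →₀ k)} {r : List Q.A →₀ k}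
    {p : List Q.A} (hp : p ∈ (f r - r).support) :
    ∃ w ∈ r.support, p ∈ (f (Finsupp.single w (1:k)) - Finsupp.single w 1).support := by
  have h1 : f r - r = (f - LinearMap.id : (List Q.A →₀ k) →ₗ[k] (List Q.A →₀ k)) r := by
    rw [LinearMap.sub_apply, LinearMap.id_apply]
  rw [h1] at hp
  obtain ⟨w, hw, hmem⟩ := support_image hp
  rw [LinearMap.sub_apply, LinearMap.id_apply] at hmem
  exact ⟨w, hw, hmem⟩

theorem apply_eq_zero_of_support {f : (List Q.A →₀ k) →ₗ[k] (List Q.A →₀ k)}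
    {r : List Q.A →₀ k} {v : List Q.A}
    (h : ∀ w ∈ r.support, v ∉ (f (Finsupp.single w (1:k))).support) : (f r) v = 0 := by
  by_contra hc
  obtain ⟨w, hw, hmem⟩ := support_image (Finsupp.mem_support_iff.mpr hc)
  exact h w hw hmem

theorem sub_apply_eq_zero_of_support {f : (List Q.A →₀ k) →ₗ[k] (List Q.A →₀ k)}
    {r : List Q.A →₀ k} {v : List Q.A}
    (h : ∀ w ∈ r.support, v ∉ (f (Finsupp.single w (1:k)) - Finsupp.single w 1).support) :
    (f r - r) v = 0 := by
  by_contra hc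
  obtain ⟨w, hw, hmem⟩ := support_image_sub (Finsupp.mem_support_iff.mpr hc)
  exact h w hw hmem

end Subst
section Key

variable {Q : Quiv} {k : Type} [Field k]

theorem key_corrections {f : (List Q.A →₀ k) →ₗ[k] (List Q.A →₀ k)} (hf : IsMult f)
    (H : ∀ γ : Q.A, ∀ p ∈ (dev f γ).support, Q.IsPath p ∧ Q.src p = some (Q.s γ) ∧
      Q.tgt p = some (Q.t γ) ∧ Q.Wp p < Q.Wa γ) :
    ∀ w : List Q.A, Q.IsPath w →
      ∀ p ∈ (f (Finsupp.single w (1:k)) - Finsupp.single w 1).support,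
        Q.IsPath p ∧ Q.src p = Q.src w ∧ Q.tgt p = Q.tgt w ∧ Q.Wp p < Q.Wp w := by
  intro w
  induction w with
  | nil => intro hw; exact absurd rfl hw.1
  | cons a rest ih =>
    intro hw p hp
    cases Classical.em (rest = []) with
    | inl he =>
      subst he
      have : (f (Finsupp.single [a] (1:k)) - Finsupp.single [a] 1) = dev f a := rfl
      rw [this] at hp
      obtain ⟨h1, h2, h3, h4⟩ := H a p hp
      refine ⟨h1, ?_, ?_, ?_⟩
      · rw [h2, src_cons]
      · rw [h3, tgt_singleton]
      · rw [Wp_singleton]; exact h4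
    | inr hrest =>
      have hrpath : Q.IsPath rest := isPath_tail hw hrest
      have hbd : Q.tgt [a] = Q.src rest := by
        have hc : ([a] ++ rest).Chain' (fun a b => Q.t a = Q.s b) := by simpa using hw.2
        exact chain'_boundary hc (by simp) hrest
      set A := dev f a with hA
      set R := f (Finsupp.single rest (1:k)) - Finsupp.single rest 1 with hR
      have hsplit : f (Finsupp.single (a :: rest) (1:k)) - Finsupp.single (a :: rest) 1
          = mulMA (Finsupp.single [a] (1:k)) R + (mulMA A (Finsupp.single rest (1:k))
            + mulMA A R) := by
        have e1 : (Finsupp.single (a :: rest) (1:k))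
            = mulMA (Finsupp.single [a] (1:k)) (Finsupp.single rest (1:k)) := by
          rw [mulMA_single_single, one_mul]; rfl
        have e2 : f (Finsupp.single rest (1:k)) = Finsupp.single rest 1 + R := by
          rw [hR, add_sub_cancel]
        have e3 : f (Finsupp.single [a] (1:k)) = Finsupp.single [a] 1 + A := by
          rw [hA, dev, add_sub_cancel]
        rw [e1, hf, e2, e3, mulMA_add_left, mulMA_add_right, mulMA_add_right, ← e1]
        abel
      rw [hsplit] at hp
      have hp' := Finsupp.support_add hp
      rw [Finset.mem_union] at hp'
      have hfacts : (∃ x ∈ (Finsupp.single [a] (1:k)).support, ∃ y ∈ R.support, p = x ++ y)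
          ∨ (∃ x ∈ A.support, ∃ y ∈ (Finsupp.single rest (1:k)).support, p = x ++ y)
          ∨ (∃ x ∈ A.support, ∃ y ∈ R.support, p = x ++ y) := by
        rcases hp' with h | h
        · exact Or.inl (mulMA_support _ _ _ h)
        · have h2 := Finsupp.support_add h
          rw [Finset.mem_union] at h2
          rcases h2 with h | h
          · exact Or.inr (Or.inl (mulMA_support _ _ _ h))
          · exact Or.inr (Or.inr (mulMA_support _ _ _ h))
      have hAfact : ∀ x ∈ A.support, Q.IsPath x ∧ Q.src x = some (Q.s a) ∧
          Q.tgt x = some (Q.t a) ∧ Q.Wp x < Q.Wa a := fun x hx => H a x hx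
      have hRfact : ∀ y ∈ R.support, Q.IsPath y ∧ Q.src y = Q.src rest ∧
          Q.tgt y = Q.tgt rest ∧ Q.Wp y < Q.Wp rest := fun y hy => ih hrpath y hy
      rcases hfacts with ⟨x, hx, y, hy, rfl⟩ | ⟨x, hx, y, hy, rfl⟩ | ⟨x, hx, y, hy, rfl⟩
      · -- x = [a], y ∈ R
        have hxa : x = [a] := by
          have := Finsupp.support_single_subset hx
          simpa using this
        subst hxa
        obtain ⟨hyp, hys, hyt, hyw⟩ := hRfact y hy
        refine ⟨?_, ?_, ?_, ?_⟩
        · exact isPath_append (isPath_singleton a) hyp (by rw [hbd, hys])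
        · rw [src_append _ (by simp), src_cons]; rfl
        · rw [tgt_append _ hyp.1, hyt, show (a :: rest) = [a] ++ rest from rfl,
            tgt_append _ hrest]
        · rw [Wp_append, Wp_singleton, Wp_cons]
          omega
      · -- x ∈ A, y = rest
        have hyr : y = rest := by
          have := Finsupp.support_single_subset hy
          simpa using this
        rw [hyr]
        obtain ⟨hxp, hxs, hxt, hxw⟩ := hAfact x hx
        refine ⟨?_, ?_, ?_, ?_⟩
        · exact isPath_append hxp hrpath (by rw [hxt, ← hbd, tgt_singleton])
        · rw [src_append _ hxp.1, hxs, src_cons]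
        · rw [tgt_append _ hrest, show (a :: rest) = [a] ++ rest from rfl,
            tgt_append _ hrest]
        · rw [Wp_append, Wp_cons]
          omega
      · -- x ∈ A, y ∈ R
        obtain ⟨hxp, hxs, hxt, hxw⟩ := hAfact x hx
        obtain ⟨hyp, hys, hyt, hyw⟩ := hRfact y hy
        refine ⟨?_, ?_, ?_, ?_⟩
        · exact isPath_append hxp hyp (by rw [hxt, hys, ← hbd, tgt_singleton])
        · rw [src_append _ hxp.1, hxs, src_cons]
        · rw [tgt_append _ hyp.1, hyt, show (a :: rest) = [a] ++ rest from rfl,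
            tgt_append _ hrest]
        · rw [Wp_append, Wp_cons]
          omega

end Key
section Good

variable {Q : Quiv} [Fintype Q.A] {k : Type} [Field k]

/-- Invariant satisfied by products of transvections with bypasses bounded by `C`. -/
def GOODc (o : Q.PathOrder) (f : (List Q.A →₀ k) →ₗ[k] (List Q.A →₀ k))
    (C : Set (Q.A × List Q.A)) : Prop :=
  IsMult f ∧ f (Finsupp.single [] 1) = Finsupp.single [] 1 ∧
    ∀ γ : Q.A, ∀ w ∈ (dev f γ).support,
      Q.IsBypass γ w ∧ ∃ d ∈ C, o.bple (γ, w) d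

variable {o : Q.PathOrder}

theorem H_of_good (hnc : Q.NoCycle) (hnm : Q.NoMultipleArrows)
    {f : (List Q.A →₀ k) →ₗ[k] (List Q.A →₀ k)} {C : Set (Q.A × List Q.A)}
    (h : GOODc o f C) :
    ∀ γ : Q.A, ∀ p ∈ (dev f γ).support, Q.IsPath p ∧ Q.src p = some (Q.s γ) ∧
      Q.tgt p = some (Q.t γ) ∧ Q.Wp p < Q.Wa γ := by
  intro γ p hp
  obtain ⟨hb, -⟩ := h.2.2 γ p hp
  exact ⟨hb.1, hb.2.1, hb.2.2.1, wp_lt_wa hnc hnm hb⟩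

theorem good_id (C : Set (Q.A × List Q.A)) :
    GOODc o (LinearMap.id : (List Q.A →₀ k) →ₗ[k] (List Q.A →₀ k)) C := by
  refine ⟨isMult_id, rfl, ?_⟩
  intro γ w hw
  rw [dev_id] at hw
  simp at hw

theorem good_mono {f : (List Q.A →₀ k) →ₗ[k] (List Q.A →₀ k)}
    {C C' : Set (Q.A × List Q.A)} (hsub : C ⊆ C') (h : GOODc o f C) : GOODc o f C' := by
  refine ⟨h.1, h.2.1, ?_⟩
  intro γ w hw
  obtain ⟨hb, d, hd, hle⟩ := h.2.2 γ w hw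
  exact ⟨hb, d, hsub hd, hle⟩

theorem good_transvection {β : Q.A} {v : List Q.A} (hb : Q.IsBypass β v) (τ : k)
    {C : Set (Q.A × List Q.A)} (hC : (β, v) ∈ C) : GOODc o (substMap Q k β v τ) C := by
  refine ⟨isMult_substMap β v τ, substMap_one β v τ, ?_⟩
  intro γ w hw
  by_cases hγ : γ = β
  · subst hγ
    rw [dev_substMap_self] at hw
    have := Finsupp.support_smul hw
    have hwv : w = v := by
      have h2 := Finsupp.support_single_subset this
      simpa using h2
    subst hwv
    exact ⟨hb, (γ, w), hC, bple_refl _⟩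
  · rw [dev_substMap_ne _ _ _ hγ] at hw
    simp at hw

theorem good_comp (hnc : Q.NoCycle) (hnm : Q.NoMultipleArrows)
    {f g : (List Q.A →₀ k) →ₗ[k] (List Q.A →₀ k)} {C : Set (Q.A × List Q.A)}
    (hf : GOODc o f C) (hg : GOODc o g C) : GOODc o (f ∘ₗ g) C := by
  refine ⟨isMult_comp hf.1 hg.1, ?_, ?_⟩
  · rw [LinearMap.comp_apply, hg.2.1, hf.2.1]
  · intro γ w hw
    rw [dev_comp] at hw
    rcases Finset.mem_union.mp (Finsupp.support_add hw) with h | h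
    · exact hf.2.2 γ w h
    · obtain ⟨w1, hw1, hmem⟩ := support_image h
      obtain ⟨hb1, d, hd, hle1⟩ := hg.2.2 γ w1 hw1
      have hsplit : f (Finsupp.single w1 (1:k)) = Finsupp.single w1 1 +
          (f (Finsupp.single w1 (1:k)) - Finsupp.single w1 1) := by rw [add_sub_cancel]
      rw [hsplit] at hmem
      rcases Finset.mem_union.mp (Finsupp.support_add hmem) with h2 | h2
      · have hww1 : w = w1 := by
          have := Finsupp.support_single_subset h2
          simpa using this
        subst hww1
        exact ⟨hb1, d, hd, hle1⟩
      · obtain ⟨hp, hsrc, htgt, hWp⟩ :=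
          key_corrections hf.1 (H_of_good hnc hnm hf) w1 hb1.1 w h2
        have hW1 : Q.Wp w1 < Q.Wa γ := wp_lt_wa hnc hnm hb1
        have hbw : Q.IsBypass γ w := by
          refine ⟨hp, by rw [hsrc, hb1.2.1], by rw [htgt, hb1.2.2.1], ?_⟩
          intro hwe
          rw [hwe, Wp_singleton] at hWp
          omega
        refine ⟨hbw, d, hd, Or.inl (bplt_of_bplt_of_bple ?_ hle1)⟩
        exact bplt_of_wp_lt γ hp hb1.1 hWp

/-- The transvection `φ_{α,u,τ}` as a linear automorphism. -/
noncomputable def tvE (x : Q.A × List Q.A × k) :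
    (List Q.A →₀ k) ≃ₗ[k] (List Q.A →₀ k) :=
  if h : x.1 ∉ x.2.1 then
    LinearEquiv.ofLinear (substMap Q k x.1 x.2.1 x.2.2) (substMap Q k x.1 x.2.1 (-x.2.2))
      (by rw [substMap_comp_same h, neg_add_cancel, substMap_zero_eq_id])
      (by rw [substMap_comp_same h, add_neg_cancel, substMap_zero_eq_id])
  else LinearEquiv.refl k _

theorem tvE_coe {x : Q.A × List Q.A × k} (h : x.1 ∉ x.2.1) :
    (tvE x).toLinearMap = substMap Q k x.1 x.2.1 x.2.2 := by
  rw [tvE, dif_pos h]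
  rfl

theorem mulE_coe (e1 e2 : (List Q.A →₀ k) ≃ₗ[k] (List Q.A →₀ k)) :
    (e1 * e2).toLinearMap = e1.toLinearMap ∘ₗ e2.toLinearMap := rfl

theorem oneE_coe : ((1 : (List Q.A →₀ k) ≃ₗ[k] (List Q.A →₀ k))).toLinearMap
    = LinearMap.id := rfl

/-- Ordered product of transvections: the later elements of the list act last. -/
noncomputable def prodE (L : List (Q.A × List Q.A × k)) :
    (List Q.A →₀ k) ≃ₗ[k] (List Q.A →₀ k) :=
  ((L.map tvE).reverse).prod

theorem prodE_nil : (prodE ([] : List (Q.A × List Q.A × k))) = 1 := rfl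

theorem prodE_concat (L : List (Q.A × List Q.A × k)) (x : Q.A × List Q.A × k) :
    prodE (L ++ [x]) = tvE x * prodE L := by
  rw [prodE, prodE, List.map_append, List.reverse_append]
  simp

theorem prodE_cons (L : List (Q.A × List Q.A × k)) (x : Q.A × List Q.A × k) :
    prodE (x :: L) = prodE L * tvE x := by
  rw [prodE, prodE, List.map_cons, List.reverse_cons, List.prod_append]
  simp

/-- Bypasses of the elements of a list of transvection data. -/
def CL (L : List (Q.A × List Q.A × k)) : Set (Q.A × List Q.A) :=
  {b | ∃ x ∈ L, b = (x.1, x.2.1)}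

theorem good_prodE (hnc : Q.NoCycle) (hnm : Q.NoMultipleArrows)
    {L : List (Q.A × List Q.A × k)} (hL : ∀ x ∈ L, Q.IsBypass x.1 x.2.1) :
    GOODc o (prodE L).toLinearMap (CL L) := by
  induction L with
  | nil => exact good_id _
  | cons x L' ih =>
    have hx := hL x List.mem_cons_self
    rw [prodE_cons, mulE_coe, tvE_coe (arrow_not_mem_bypass hnc hx)]
    refine good_comp hnc hnm ?_ ?_
    · refine good_mono ?_ (ih (fun y hy => hL y (List.mem_cons_of_mem x hy)))
      rintro b ⟨y, hy, rfl⟩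
      exact ⟨y, List.mem_cons_of_mem x hy, rfl⟩
    · exact good_transvection hx x.2.2 ⟨x, List.mem_cons_self, rfl⟩

/-- Support data of an endomorphism. -/
def devset (f : (List Q.A →₀ k) →ₗ[k] (List Q.A →₀ k)) : Set (Q.A × List Q.A) :=
  {z | z.2 ∈ (dev f z.1).support}

theorem devset_finite (f : (List Q.A →₀ k) →ₗ[k] (List Q.A →₀ k)) :
    (devset f).Finite := by
  apply Set.Finite.subset (Set.finite_iUnion
    (fun γ : Q.A => ((dev f γ).support.finite_toSet.image (fun w => (γ, w)))))
  rintro ⟨γ, w⟩ hz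
  exact Set.mem_iUnion.mpr ⟨γ, ⟨w, hz, rfl⟩⟩

/-- Downward closure of the support data. -/
def DCset (o : Q.PathOrder) (f : (List Q.A →₀ k) →ₗ[k] (List Q.A →₀ k)) :
    Set (Q.A × List Q.A) :=
  {b | Q.IsBypass b.1 b.2 ∧ ∃ d ∈ devset f, o.bple b d}

theorem DCset_finite (hnc : Q.NoCycle) (f : (List Q.A →₀ k) →ₗ[k] (List Q.A →₀ k)) :
    (DCset o f).Finite := by
  apply Set.Finite.subset (finite_bypass_set hnc (fun _ => True))
  rintro b ⟨hb, -⟩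
  exact ⟨hb, trivial⟩

theorem devset_subset_DCset {f : (List Q.A →₀ k) →ₗ[k] (List Q.A →₀ k)}
    {C : Set (Q.A × List Q.A)} (hg : GOODc o f C) : devset f ⊆ DCset o f := by
  intro z hz
  exact ⟨(hg.2.2 z.1 z.2 hz).1, z, hz, bple_refl z⟩

end Good
section Strip

variable {Q : Quiv} [Fintype Q.A] {k : Type} [Field k] {o : Q.PathOrder}

/-- The set of bypasses `≤ b0`. -/
def Ble (o : Q.PathOrder) (b0 : Q.A × List Q.A) : Set (Q.A × List Q.A) :=
  {b | Q.IsBypass b.1 b.2 ∧ o.bple b b0}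

theorem eq_one_of_devset_empty (ψ : (List Q.A →₀ k) ≃ₗ[k] (List Q.A →₀ k))
    (hm : IsMult ψ.toLinearMap)
    (h1 : ψ.toLinearMap (Finsupp.single [] 1) = Finsupp.single [] 1)
    (he : devset ψ.toLinearMap = ∅) : ψ = 1 := by
  apply LinearEquiv.toLinearMap_injective
  rw [oneE_coe]
  apply mult_ext hm isMult_id h1
  intro a
  have hsupp : (dev ψ.toLinearMap a).support = ∅ := by
    by_contra hc
    obtain ⟨w, hw⟩ := Finset.nonempty_iff_ne_empty.mpr hc
    exact absurd (Set.eq_empty_iff_forall_notMem.mp he (a, w)) (fun h => h hw)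
  have hdev : dev ψ.toLinearMap a = 0 := Finsupp.support_eq_empty.mp hsupp
  rw [dev, sub_eq_zero] at hdev
  rw [hdev, LinearMap.id_apply]

theorem strip_main (hnc : Q.NoCycle) (hnm : Q.NoMultipleArrows) {b0 : Q.A × List Q.A}
    (ψ : (List Q.A →₀ k) ≃ₗ[k] (List Q.A →₀ k)) (hg : GOODc o ψ.toLinearMap (Ble o b0))
    (hne : (devset ψ.toLinearMap).Nonempty) :
    ∃ (c : Q.A × List Q.A) (τ : k) (ψ' : (List Q.A →₀ k) ≃ₗ[k] (List Q.A →₀ k)),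
      c ∈ devset ψ.toLinearMap ∧ Q.IsBypass c.1 c.2 ∧ τ ≠ 0 ∧
      ψ = tvE (c.1, c.2, τ) * ψ' ∧
      GOODc o ψ'.toLinearMap (Ble o b0) ∧
      (∀ z ∈ devset ψ'.toLinearMap,
        Q.IsBypass z.1 z.2 ∧ o.bplt z c ∧ ∃ d ∈ devset ψ.toLinearMap, o.bple z d) := by
  obtain ⟨c, hcmem, hcmax⟩ := exists_bple_max o (devset ψ.toLinearMap)
    (devset_finite _) hne (fun z hz => (hg.2.2 z.1 z.2 hz).1)
  obtain ⟨β, v⟩ := c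
  set f := ψ.toLinearMap with hf
  have hcb : Q.IsBypass β v := (hg.2.2 β v hcmem).1
  have hnotmem : β ∉ v := arrow_not_mem_bypass hnc hcb
  set τ := dev f β v with hτdef
  have hτ : τ ≠ 0 := Finsupp.mem_support_iff.mp hcmem
  set ψ' := tvE (β, v, -τ) * ψ with hψ'
  set g := substMap Q k β v (-τ) with hgdef
  have hcoe : ψ'.toLinearMap = g ∘ₗ f := by
    rw [hψ', mulE_coe, tvE_coe (x := (β, v, -τ)) hnotmem]
  have hGg : GOODc o g {(β, v)} := good_transvection hcb (-τ) rfl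
  -- subclaim A
  have hA : ∀ γ : Q.A, ∀ w' ∈ (g (dev f γ)).support,
      Q.IsBypass γ w' ∧ (∃ d ∈ devset f, o.bple (γ, w') d) ∧ o.bple (γ, w') (β, v) := by
    intro γ w' hw'
    obtain ⟨w1, hw1, hmem⟩ := support_image hw'
    have hb1 : Q.IsBypass γ w1 := (hg.2.2 γ w1 hw1).1
    have hle1 : o.bple (γ, w1) (β, v) := hcmax (γ, w1) hw1
    have hsplit : g (Finsupp.single w1 (1:k)) = Finsupp.single w1 1 +
        (g (Finsupp.single w1 (1:k)) - Finsupp.single w1 1) := by rw [add_sub_cancel]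
    rw [hsplit] at hmem
    rcases Finset.mem_union.mp (Finsupp.support_add hmem) with h2 | h2
    · have hww1 : w' = w1 := by
        have := Finsupp.support_single_subset h2
        simpa using this
      subst hww1
      exact ⟨hb1, ⟨(γ, w'), hw1, bple_refl _⟩, hle1⟩
    · obtain ⟨hp, hsrc, htgt, hWp⟩ :=
        key_corrections hGg.1 (H_of_good hnc hnm hGg) w1 hb1.1 w' h2
      have hW1 : Q.Wp w1 < Q.Wa γ := wp_lt_wa hnc hnm hb1
      have hbw : Q.IsBypass γ w' := by
        refine ⟨hp, by rw [hsrc, hb1.2.1], by rw [htgt, hb1.2.2.1], ?_⟩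
        intro hwe
        rw [hwe, Wp_singleton] at hWp
        omega
      have hlt : o.bplt (γ, w') (γ, w1) := bplt_of_wp_lt γ hp hb1.1 hWp
      exact ⟨hbw, ⟨(γ, w1), hw1, Or.inl hlt⟩, Or.inl (bplt_of_bplt_of_bple hlt hle1)⟩
  -- main claim about the new devset
  have hdev : ∀ γ : Q.A, ∀ w ∈ (dev ψ'.toLinearMap γ).support,
      Q.IsBypass γ w ∧ o.bplt (γ, w) (β, v) ∧ ∃ d ∈ devset f, o.bple (γ, w) d := by
    intro γ w hw
    rw [hcoe, dev_comp] at hw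
    by_cases hγ : γ = β
    · subst hγ
      -- value at v vanishes
      have hval : (dev g γ + g (dev f γ)) v = 0 := by
        have hv1 : dev g γ = -τ • Finsupp.single v 1 := dev_substMap_self γ v (-τ)
        have hv2 : (g (dev f γ) - dev f γ) v = 0 := by
          apply sub_apply_eq_zero_of_support
          intro w1 hw1 hvmem
          have hb1 : Q.IsBypass γ w1 := (hg.2.2 γ w1 hw1).1
          have hle1 : o.bple (γ, w1) (γ, v) := hcmax (γ, w1) hw1
          have hWle : Q.Wp w1 ≤ Q.Wp v := wp_le_of_bple_same hb1.1 hcb.1 hle1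
          obtain ⟨-, -, -, hWp⟩ :=
            key_corrections hGg.1 (H_of_good hnc hnm hGg) w1 hb1.1 v hvmem
          omega
        have hv3 : (g (dev f γ)) v = (dev f γ) v := by
          have h4 := hv2
          rw [Finsupp.sub_apply] at h4
          exact sub_eq_zero.mp h4
        rw [Finsupp.add_apply, hv1, hv3, ← hτdef, Finsupp.smul_apply,
          Finsupp.single_eq_same, smul_eq_mul, mul_one]
        exact neg_add_cancel τ
      have hwv : w ≠ v := by
        intro he
        rw [he] at hw
        exact Finsupp.mem_support_iff.mp hw hval
      rcases Finset.mem_union.mp (Finsupp.support_add hw) with h | h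
      · exfalso
        rw [dev_substMap_self] at h
        have h2 := Finsupp.support_smul h
        have := Finsupp.support_single_subset h2
        simp at this
        exact hwv this
      · obtain ⟨hb, hd, hle⟩ := hA γ w h
        refine ⟨hb, ?_, hd⟩
        rcases hle with hlt | heq
        · exact hlt
        · exact absurd (congrArg Prod.snd heq) hwv
    · rw [dev_substMap_ne _ _ _ hγ, zero_add] at hw
      obtain ⟨hb, hd, hle⟩ := hA γ w hw
      refine ⟨hb, ?_, hd⟩
      rcases hle with hlt | heq
      · exact hlt
      · exact absurd (congrArg Prod.fst heq) hγ
  -- conclude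
  refine ⟨(β, v), τ, ψ', hcmem, hcb, hτ, ?_, ?_, ?_⟩
  · -- ψ = tvE (β,v,τ) * ψ'
    rw [hψ', ← mul_assoc]
    have hone : tvE (β, v, τ) * tvE (β, v, -τ) = 1 := by
      apply LinearEquiv.toLinearMap_injective
      rw [mulE_coe, tvE_coe (x := (β, v, τ)) hnotmem, tvE_coe (x := (β, v, -τ)) hnotmem,
        oneE_coe, substMap_comp_same hnotmem, neg_add_cancel, substMap_zero_eq_id]
    rw [hone, one_mul]
  · -- GOOD
    refine ⟨by rw [hcoe]; exact isMult_comp hGg.1 hg.1, ?_, ?_⟩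
    · rw [hcoe, LinearMap.comp_apply, hg.2.1, hGg.2.1]
    · intro γ w hw
      obtain ⟨hb, hlt, -⟩ := hdev γ w hw
      obtain ⟨-, d, hd, hled⟩ := hg.2.2 β v hcmem
      exact ⟨hb, d, hd, Or.inl (bplt_of_bplt_of_bple hlt hled)⟩
  · exact fun z hz => hdev z.1 z.2 hz

end Strip
section ExistsList

variable {Q : Quiv} [Fintype Q.A] {k : Type} [Field k] {o : Q.PathOrder}

theorem existsList (hnc : Q.NoCycle) (hnm : Q.NoMultipleArrows) {b0 : Q.A × List Q.A}
    (N : ℕ) :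
    ∀ ψ : (List Q.A →₀ k) ≃ₗ[k] (List Q.A →₀ k), GOODc o ψ.toLinearMap (Ble o b0) →
    (DCset o ψ.toLinearMap).ncard ≤ N →
    ∃ L : List (Q.A × List Q.A × k),
      (∀ x ∈ L, Q.IsBypass x.1 x.2.1 ∧ x.2.2 ≠ 0 ∧ (x.1, x.2.1) ∈ DCset o ψ.toLinearMap) ∧
      List.Chain' (fun x y => o.bplt (x.1, x.2.1) (y.1, y.2.1)) L ∧ ψ = prodE L := by
  induction N with
  | zero =>
    intro ψ hg hcard
    by_cases hdev : devset ψ.toLinearMap = ∅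
    · exact ⟨[], by simp, List.isChain_nil, eq_one_of_devset_empty ψ hg.1 hg.2.1 hdev⟩
    · exfalso
      obtain ⟨z, hz⟩ := Set.nonempty_iff_ne_empty.mpr hdev
      have hzDC : z ∈ DCset o ψ.toLinearMap := devset_subset_DCset hg hz
      have : 0 < (DCset o ψ.toLinearMap).ncard :=
        (Set.ncard_pos (DCset_finite hnc _)).mpr ⟨z, hzDC⟩
      omega
  | succ N ih =>
    intro ψ hg hcard
    by_cases hdev : devset ψ.toLinearMap = ∅
    · exact ⟨[], by simp, List.isChain_nil, eq_one_of_devset_empty ψ hg.1 hg.2.1 hdev⟩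
    · have hne : (devset ψ.toLinearMap).Nonempty := Set.nonempty_iff_ne_empty.mpr hdev
      obtain ⟨⟨β, v⟩, τ, ψ', hcmem, hcb, hτ, hprod, hgood', hdev'⟩ :=
        strip_main hnc hnm ψ hg hne
      have hcDC : (β, v) ∈ DCset o ψ.toLinearMap := ⟨hcb, (β, v), hcmem, bple_refl _⟩
      have DCsub : DCset o ψ'.toLinearMap ⊆ DCset o ψ.toLinearMap \ {(β, v)} := by
        rintro b ⟨hbby, d', hd', hled'⟩
        obtain ⟨hd'b, hd'lt, d, hd, hled⟩ := hdev' d' hd'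
        refine ⟨⟨hbby, d, hd, bple_trans hled' hled⟩, ?_⟩
        intro hbc
        rw [Set.mem_singleton_iff] at hbc
        subst hbc
        exact bplt_irrefl hcb.1 (bplt_of_bple_of_bplt hled' hd'lt)
      have hcard' : (DCset o ψ'.toLinearMap).ncard ≤ N := by
        have h1 := Set.ncard_le_ncard DCsub ((DCset_finite hnc _).diff)
        have h2 := Set.ncard_diff_singleton_lt_of_mem hcDC (DCset_finite hnc _)
        omega
      obtain ⟨L', hL'mem, hL'chain, hL'prod⟩ := ih ψ' hgood' hcard'
      refine ⟨L' ++ [(β, v, τ)], ?_, ?_, ?_⟩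
      · intro x hx
        rcases List.mem_append.mp hx with hx | hx
        · obtain ⟨h1, h2, h3⟩ := hL'mem x hx
          exact ⟨h1, h2, (DCsub h3).1⟩
        · rw [List.mem_singleton] at hx
          subst hx
          exact ⟨hcb, hτ, hcDC⟩
      · refine List.isChain_append.mpr ?_
        refine ⟨hL'chain, List.isChain_singleton _, ?_⟩
        intro x hx y hy
        rw [List.head?_cons, Option.mem_some_iff] at hy
        subst hy
        have hxL : x ∈ L' := List.mem_of_getLast? hx
        obtain ⟨-, -, h3⟩ := hL'mem x hxL
        obtain ⟨-, d', hd', hled'⟩ := h3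
        obtain ⟨-, hd'lt, -⟩ := hdev' d' hd'
        exact bplt_of_bple_of_bplt hled' hd'lt
      · rw [prodE_concat, ← hL'prod, ← hprod]

end ExistsList
section Uniq

variable {Q : Quiv} [Fintype Q.A] {k : Type} [Field k] {o : Q.PathOrder}

theorem val_zero (hnc : Q.NoCycle) (hnm : Q.NoMultipleArrows) {x : Q.A × List Q.A × k}
    (hx : Q.IsBypass x.1 x.2.1) {f : (List Q.A →₀ k) →ₗ[k] (List Q.A →₀ k)}
    {C : Set (Q.A × List Q.A)} (hgood : GOODc o f C) {β : Q.A} {v : List Q.A}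
    (hcb : Q.IsBypass β v) (hC : ∀ d ∈ C, o.bplt d (β, v)) :
    (substMap Q k x.1 x.2.1 x.2.2 (dev f β)) v = 0 := by
  apply apply_eq_zero_of_support
  intro w1 hw1 hvmem
  obtain ⟨hb1, d, hd, hled⟩ := hgood.2.2 β w1 hw1
  have hlt : o.bplt (β, w1) (β, v) := bplt_of_bple_of_bplt hled (hC d hd)
  have hltw : o.lt w1 v := lt_of_bplt_same hlt
  have hne : w1 ≠ v := fun he => o.irrefl v hcb.1 (he ▸ hltw)
  have hWle : Q.Wp w1 ≤ Q.Wp v := lt_wp_le hb1.1 hcb.1 hltw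
  have hGg : GOODc o (substMap Q k x.1 x.2.1 x.2.2) {(x.1, x.2.1)} :=
    good_transvection hx x.2.2 rfl
  have hsplit : substMap Q k x.1 x.2.1 x.2.2 (Finsupp.single w1 (1:k)) =
      Finsupp.single w1 1 + (substMap Q k x.1 x.2.1 x.2.2 (Finsupp.single w1 (1:k))
        - Finsupp.single w1 1) := by rw [add_sub_cancel]
  rw [hsplit] at hvmem
  rcases Finset.mem_union.mp (Finsupp.support_add hvmem) with h2 | h2
  · have := Finsupp.support_single_subset h2
    simp at this
    exact hne this.symm
  · obtain ⟨-, -, -, hWp⟩ :=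
      key_corrections hGg.1 (H_of_good hnc hnm hGg) w1 hb1.1 v h2
    omega

theorem dev_prodE_concat {L : List (Q.A × List Q.A × k)} {x : Q.A × List Q.A × k}
    (hx : x.1 ∉ x.2.1) (γ : Q.A) :
    dev (prodE (L ++ [x])).toLinearMap γ = dev (substMap Q k x.1 x.2.1 x.2.2) γ +
      substMap Q k x.1 x.2.1 x.2.2 (dev (prodE L).toLinearMap γ) := by
  rw [prodE_concat, mulE_coe, tvE_coe hx, dev_comp]

theorem coef_zero (hnc : Q.NoCycle) (hnm : Q.NoMultipleArrows)
    {L : List (Q.A × List Q.A × k)} (hL : ∀ x ∈ L, Q.IsBypass x.1 x.2.1)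
    {β : Q.A} {v : List Q.A} (hcb : Q.IsBypass β v)
    (hbound : ∀ x ∈ L, o.bplt (x.1, x.2.1) (β, v)) :
    (dev (prodE L).toLinearMap β) v = 0 := by
  induction L using List.reverseRecOn with
  | nil =>
    rw [prodE_nil, oneE_coe, dev_id]
    rfl
  | append_singleton L' x ih =>
    have hx : Q.IsBypass x.1 x.2.1 := hL x (by simp)
    have hL' : ∀ y ∈ L', Q.IsBypass y.1 y.2.1 := fun y hy => hL y (by simp [hy])
    rw [dev_prodE_concat (arrow_not_mem_bypass hnc hx), Finsupp.add_apply]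
    have h1 : (dev (substMap Q k x.1 x.2.1 x.2.2) β) v = 0 := by
      by_cases hβ : x.1 = β
      · have hxlt := hbound x (by simp)
        rw [← hβ]
        rw [dev_substMap_self]
        rw [← hβ] at hxlt
        have hne : x.2.1 ≠ v := by
          intro he
          rw [he] at hxlt
          exact bplt_irrefl hcb.1 (by rwa [hβ] at hxlt)
        rw [Finsupp.smul_apply, Finsupp.single_apply, if_neg hne, smul_eq_mul, mul_zero]
      · rw [dev_substMap_ne _ _ _ (fun h => hβ h.symm)]
        rfl
    have h2 : (substMap Q k x.1 x.2.1 x.2.2 (dev (prodE L').toLinearMap β)) v = 0 := by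
      refine val_zero (o := o) hnc hnm hx (good_prodE (o := o) hnc hnm hL') hcb ?_
      rintro d ⟨y, hy, rfl⟩
      exact hbound y (by simp [hy])
    rw [h1, h2, add_zero]

theorem coef_last (hnc : Q.NoCycle) (hnm : Q.NoMultipleArrows)
    {L : List (Q.A × List Q.A × k)} {x : Q.A × List Q.A × k}
    (hL : ∀ y ∈ L ++ [x], Q.IsBypass y.1 y.2.1)
    (hbound : ∀ y ∈ L, o.bplt (y.1, y.2.1) (x.1, x.2.1)) :
    (dev (prodE (L ++ [x])).toLinearMap x.1) x.2.1 = x.2.2 := by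
  have hx : Q.IsBypass x.1 x.2.1 := hL x (by simp)
  have hL' : ∀ y ∈ L, Q.IsBypass y.1 y.2.1 := fun y hy => hL y (by simp [hy])
  rw [dev_prodE_concat (arrow_not_mem_bypass hnc hx), Finsupp.add_apply]
  have h1 : (dev (substMap Q k x.1 x.2.1 x.2.2) x.1) x.2.1 = x.2.2 := by
    rw [dev_substMap_self, Finsupp.smul_apply, Finsupp.single_eq_same, smul_eq_mul, mul_one]
  have h2 : (substMap Q k x.1 x.2.1 x.2.2 (dev (prodE L).toLinearMap x.1)) x.2.1 = 0 := by
    refine val_zero (o := o) hnc hnm hx (good_prodE (o := o) hnc hnm hL') hx ?_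
    rintro d ⟨y, hy, rfl⟩
    exact hbound y hy
  rw [h1, h2, add_zero]

theorem chain'_append_singleton_lt {L : List (Q.A × List Q.A × k)}
    {x : Q.A × List Q.A × k}
    (h : List.Chain' (fun a b : Q.A × List Q.A × k => o.bplt (a.1, a.2.1) (b.1, b.2.1))
      (L ++ [x])) :
    ∀ y ∈ L, o.bplt (y.1, y.2.1) (x.1, x.2.1) := by
  haveI : IsTrans (Q.A × List Q.A × k)
      (fun a b : Q.A × List Q.A × k => o.bplt (a.1, a.2.1) (b.1, b.2.1)) :=
    ⟨fun _ _ _ hab hbc => bplt_trans hab hbc⟩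
  have hp := List.isChain_iff_pairwise.mp h
  have := (List.pairwise_append.mp hp).2.2
  intro y hy
  exact this y hy x (by simp)

theorem list_unique (hnc : Q.NoCycle) (hnm : Q.NoMultipleArrows) (n : ℕ) :
    ∀ L M : List (Q.A × List Q.A × k), L.length + M.length ≤ n →
    (∀ x ∈ L, Q.IsBypass x.1 x.2.1 ∧ x.2.2 ≠ 0) →
    (∀ x ∈ M, Q.IsBypass x.1 x.2.1 ∧ x.2.2 ≠ 0) →
    List.Chain' (fun a b : Q.A × List Q.A × k => o.bplt (a.1, a.2.1) (b.1, b.2.1)) L →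
    List.Chain' (fun a b : Q.A × List Q.A × k => o.bplt (a.1, a.2.1) (b.1, b.2.1)) M →
    prodE L = prodE M → L = M := by
  induction n with
  | zero =>
    intro L M hlen _ _ _ _ _
    have : L = [] := List.length_eq_zero_iff.mp (by omega)
    have hM : M = [] := List.length_eq_zero_iff.mp (by omega)
    rw [this, hM]
  | succ n ih =>
    intro L M hlen hLv hMv hLc hMc hprod
    rcases List.eq_nil_or_concat L with rfl | ⟨L', x, rfl⟩
    all_goals try simp only [List.concat_eq_append] at hlen hLv hMv hLc hMc hprod
    · rcases List.eq_nil_or_concat M with rfl | ⟨M', y, rfl⟩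
      all_goals try simp only [List.concat_eq_append] at hlen hLv hMv hLc hMc hprod
      · rfl
      · exfalso
        have hy := coef_last (o := o) hnc hnm (fun z hz => (hMv z hz).1)
          (chain'_append_singleton_lt hMc)
        rw [← hprod, prodE_nil, oneE_coe, dev_id] at hy
        exact (hMv y (by simp)).2 (by rw [← hy]; rfl)
    · rcases List.eq_nil_or_concat M with rfl | ⟨M', y, rfl⟩
      all_goals try simp only [List.concat_eq_append] at hlen hLv hMv hLc hMc hprod
      · exfalso
        have hy := coef_last (o := o) hnc hnm (fun z hz => (hLv z hz).1)
          (chain'_append_singleton_lt hLc)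
        rw [hprod, prodE_nil, oneE_coe, dev_id] at hy
        exact (hLv x (by simp)).2 (by rw [← hy]; rfl)
      · have hxb : Q.IsBypass x.1 x.2.1 := (hLv x (by simp)).1
        have hyb : Q.IsBypass y.1 y.2.1 := (hMv y (by simp)).1
        rcases bplt_trichotomy (o := o) (b := (x.1, x.2.1)) (c := (y.1, y.2.1)) hxb hyb with hlt | heq | hlt
        · -- x < y : contradiction
          exfalso
          have hy := coef_last (o := o) hnc hnm (fun z hz => (hMv z hz).1)
            (chain'_append_singleton_lt hMc)
          have h0 : (dev (prodE (L' ++ [x])).toLinearMap y.1) y.2.1 = 0 := by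
            refine coef_zero (o := o) hnc hnm (fun z hz => (hLv z hz).1) hyb ?_
            intro z hz
            rcases List.mem_append.mp hz with hz | hz
            · exact bplt_trans (chain'_append_singleton_lt hLc z hz) hlt
            · rw [List.mem_singleton] at hz; subst hz; exact hlt
          rw [hprod, hy] at h0
          exact (hMv y (by simp)).2 h0
        · -- x.bypass = y.bypass
          have hx1 : x.1 = y.1 := congrArg (Prod.fst : Q.A × List Q.A → Q.A) heq
          have hx21 : x.2.1 = y.2.1 := congrArg (Prod.snd : Q.A × List Q.A → List Q.A) heq
          have hτeq : x.2.2 = y.2.2 := by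
            have hX := coef_last (o := o) hnc hnm (fun z hz => (hLv z hz).1)
              (chain'_append_singleton_lt hLc)
            have hY := coef_last (o := o) hnc hnm (fun z hz => (hMv z hz).1)
              (chain'_append_singleton_lt hMc)
            rw [hprod] at hX
            rw [← hx1, ← hx21] at hY
            rw [← hX, hY]
          have hxy : x = y := by
            have h2 : x.2 = y.2 := Prod.ext hx21 hτeq
            exact Prod.ext hx1 h2
          subst hxy
          have hcancel : prodE L' = prodE M' := by
            rw [prodE_concat, prodE_concat] at hprod
            exact mul_left_cancel hprod
          have hrec := ih L' M' (by simp at hlen ⊢; omega)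
            (fun z hz => hLv z (by simp [hz])) (fun z hz => hMv z (by simp [hz]))
            ((List.isChain_append.mp hLc).1) ((List.isChain_append.mp hMc).1) hcancel
          rw [hrec]
        · -- y < x : contradiction
          exfalso
          have hy := coef_last (o := o) hnc hnm (fun z hz => (hLv z hz).1)
            (chain'_append_singleton_lt hLc)
          have h0 : (dev (prodE (M' ++ [y])).toLinearMap x.1) x.2.1 = 0 := by
            refine coef_zero (o := o) hnc hnm (fun z hz => (hMv z hz).1) hxb ?_
            intro z hz
            rcases List.mem_append.mp hz with hz | hz
            · exact bplt_trans (chain'_append_singleton_lt hMc z hz) hlt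
            · rw [List.mem_singleton] at hz; subst hz; exact hlt
          rw [← hprod, hy] at h0
          exact (hLv x (by simp)).2 h0

end Uniq
section Closure

variable {Q : Quiv} [Fintype Q.A] {k : Type} [Field k] {o : Q.PathOrder}

theorem inv_coe_of_transvection {β : Q.A} {v : List Q.A} (hnot : β ∉ v) (τ : k)
    {ψ : (List Q.A →₀ k) ≃ₗ[k] (List Q.A →₀ k)}
    (h : ψ.toLinearMap = substMap Q k β v τ) :
    (ψ⁻¹).toLinearMap = substMap Q k β v (-τ) := by
  have hinv : (ψ⁻¹).toLinearMap ∘ₗ ψ.toLinearMap = LinearMap.id := by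
    rw [← mulE_coe, inv_mul_cancel, oneE_coe]
  calc (ψ⁻¹).toLinearMap
      = (ψ⁻¹).toLinearMap ∘ₗ (substMap Q k β v τ ∘ₗ substMap Q k β v (-τ)) := by
        rw [substMap_comp_same hnot, neg_add_cancel, substMap_zero_eq_id,
          LinearMap.comp_id]
    _ = ((ψ⁻¹).toLinearMap ∘ₗ ψ.toLinearMap) ∘ₗ substMap Q k β v (-τ) := by
        rw [h, LinearMap.comp_assoc]
    _ = substMap Q k β v (-τ) := by rw [hinv, LinearMap.id_comp]

theorem good_of_mem_Tle (hnc : Q.NoCycle) (hnm : Q.NoMultipleArrows)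
    {b0 : Q.A × List Q.A} {ψ : (List Q.A →₀ k) ≃ₗ[k] (List Q.A →₀ k)}
    (hψ : ψ ∈ TleSub Q k o b0) : GOODc o ψ.toLinearMap (Ble o b0) := by
  have main : GOODc o ψ.toLinearMap (Ble o b0) ∧ GOODc o (ψ⁻¹).toLinearMap (Ble o b0) := by
    induction hψ using Subgroup.closure_induction with
    | mem x hx =>
      obtain ⟨β, v, τ, hb, hle, htr⟩ := hx
      have hcoe : x.toLinearMap = substMap Q k β v τ := htr
      have hnot : β ∉ v := arrow_not_mem_bypass hnc hb
      constructor
      · rw [hcoe]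
        exact good_transvection hb τ ⟨hb, hle⟩
      · rw [inv_coe_of_transvection hnot τ hcoe]
        exact good_transvection hb (-τ) ⟨hb, hle⟩
    | one =>
      constructor
      · rw [oneE_coe]; exact good_id _
      · rw [inv_one, oneE_coe]; exact good_id _
    | mul x y hx hy ihx ihy =>
      constructor
      · rw [mulE_coe]; exact good_comp hnc hnm ihx.1 ihy.1
      · rw [mul_inv_rev, mulE_coe]; exact good_comp hnc hnm ihy.2 ihx.2
    | inv x hx ihx =>
      exact ⟨ihx.2, by rw [inv_inv]; exact ihx.1⟩
  exact main.1

end Closure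

/-- Let `(α,u)` be a bypass and `ψ ∈ T_{≤(α,u)}`.  Then
`ψ = φ_{α_n,u_n,τ_n} ∘ ⋯ ∘ φ_{α_1,u_1,τ_1}` for a unique `n ≥ 0`, unique bypasses
`(α_1,u_1) < ⋯ < (α_n,u_n) ≤ (α,u)` and unique scalars `τ_1,…,τ_n ∈ k^*`.
(Indices run over `0,…,n-1`.) -/
theorem stmt_14 (Q : Quiv) [Fintype Q.V] [Fintype Q.A]
    (k : Type) [Field k] [IsAlgClosed k]
    (hnc : Q.NoCycle) (hnm : Q.NoMultipleArrows) (o : Q.PathOrder)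
    (α : Q.A) (u : List Q.A) (hαu : Q.IsBypass α u)
    (ψ : (List Q.A →₀ k) ≃ₗ[k] (List Q.A →₀ k)) (hψ : ψ ∈ TleSub Q k o (α, u)) :
    ∃ (n : ℕ) (b : ℕ → Q.A) (w : ℕ → List Q.A) (τ : ℕ → k),
      (∀ i < n, Q.IsBypass (b i) (w i) ∧ τ i ≠ 0) ∧
      (∀ i j, i < j → j < n → o.bplt (b i, w i) (b j, w j)) ∧
      (∀ i < n, o.bple (b i, w i) (α, u)) ∧
      (∃ g : ℕ → ((List Q.A →₀ k) ≃ₗ[k] (List Q.A →₀ k)),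
        (∀ i < n, IsTransvectionE Q k (g i) (b i) (w i) (τ i)) ∧
        ψ = (((List.range n).map g).reverse).prod) ∧
      (∀ (n' : ℕ) (b' : ℕ → Q.A) (w' : ℕ → List Q.A) (τ' : ℕ → k),
        (∀ i < n', Q.IsBypass (b' i) (w' i) ∧ τ' i ≠ 0) →
        (∀ i j, i < j → j < n' → o.bplt (b' i, w' i) (b' j, w' j)) →
        (∀ i < n', o.bple (b' i, w' i) (α, u)) →
        (∃ g' : ℕ → ((List Q.A →₀ k) ≃ₗ[k] (List Q.A →₀ k)),
          (∀ i < n', IsTransvectionE Q k (g' i) (b' i) (w' i) (τ' i)) ∧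
          ψ = (((List.range n').map g').reverse).prod) →
        n' = n ∧ ∀ i < n, b' i = b i ∧ w' i = w i ∧ τ' i = τ i) := by
  have hgood := good_of_mem_Tle hnc hnm hψ
  obtain ⟨L, hLmem, hLchain, hLprod⟩ :=
    existsList (o := o) hnc hnm (DCset o ψ.toLinearMap).ncard ψ hgood le_rfl
  set dflt : Q.A × List Q.A × k := (α, u, 0) with hdflt
  have hget : ∀ i (h : i < L.length), L.getD i dflt = L[i] :=
    fun i h => List.getD_eq_getElem L dflt h
  have hmemL : ∀ i (h : i < L.length), L[i] ∈ L := fun i h => List.getElem_mem h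
  haveI htrans : IsTrans (Q.A × List Q.A × k)
      (fun a b : Q.A × List Q.A × k => o.bplt (a.1, a.2.1) (b.1, b.2.1)) :=
    ⟨fun _ _ _ hab hbc => bplt_trans hab hbc⟩
  refine ⟨L.length, fun i => (L.getD i dflt).1, fun i => (L.getD i dflt).2.1,
    fun i => (L.getD i dflt).2.2, ?_, ?_, ?_, ?_, ?_⟩
  · intro i hi
    dsimp only
    rw [hget i hi]
    obtain ⟨h1, h2, -⟩ := hLmem _ (hmemL i hi)
    exact ⟨h1, h2⟩
  · intro i j hij hj
    have hi : i < L.length := lt_trans hij hj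
    dsimp only
    rw [hget i hi, hget j hj]
    exact (List.pairwise_iff_getElem.mp (List.isChain_iff_pairwise.mp hLchain))
      i j hi hj hij
  · intro i hi
    dsimp only
    rw [hget i hi]
    obtain ⟨-, -, hb, d, hd, hle⟩ := hLmem _ (hmemL i hi)
    obtain ⟨-, e, ⟨-, hele⟩, hdle⟩ := hgood.2.2 d.1 d.2 hd
    exact bple_trans hle (bple_trans hdle hele)
  · refine ⟨fun i => tvE (L.getD i dflt), ?_, ?_⟩
    · intro i hi
      have hb : Q.IsBypass (L.getD i dflt).1 (L.getD i dflt).2.1 := by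
        rw [hget i hi]
        exact (hLmem _ (hmemL i hi)).1
      exact tvE_coe (arrow_not_mem_bypass hnc hb)
    · have hmap : (List.range L.length).map (fun i => tvE (L.getD i dflt)) = L.map tvE := by
        apply List.ext_getElem (by simp)
        intro i h1 h2
        simp only [List.getElem_map, List.getElem_range]
        rw [hget i (by simpa using h2)]
      rw [hmap]
      exact hLprod
  · intro n' b' w' τ' h1' h2' h3' hex
    obtain ⟨g', hg', hψ'⟩ := hex
    set M := (List.range n').map (fun i => (b' i, w' i, τ' i)) with hM
    have hMlen : M.length = n' := by simp [hM]
    have hMget : ∀ i (h : i < n'), M.getD i dflt = (b' i, w' i, τ' i) := by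
      intro i h
      rw [List.getD_eq_getElem M dflt (by rw [hMlen]; exact h)]
      simp [hM]
    have hMvalid : ∀ x ∈ M, Q.IsBypass x.1 x.2.1 ∧ x.2.2 ≠ 0 := by
      intro x hx
      rw [hM, List.mem_map] at hx
      obtain ⟨i, hi, rfl⟩ := hx
      rw [List.mem_range] at hi
      exact h1' i hi
    have hMchain : List.Chain'
        (fun a b : Q.A × List Q.A × k => o.bplt (a.1, a.2.1) (b.1, b.2.1)) M := by
      apply List.isChain_iff_pairwise.mpr
      apply List.pairwise_iff_getElem.mpr
      intro i j hi hj hij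
      rw [hMlen] at hi hj
      have hMi : M[i]'(by rw [hMlen]; exact hi) = (b' i, w' i, τ' i) := by simp [hM]
      have hMj : M[j]'(by rw [hMlen]; exact hj) = (b' j, w' j, τ' j) := by simp [hM]
      rw [hMi, hMj]
      exact h2' i j hij hj
    have hMprod : prodE M = ψ := by
      have hmap2 : M.map tvE = (List.range n').map g' := by
        rw [hM, List.map_map]
        apply List.map_congr_left
        intro i hi
        rw [List.mem_range] at hi
        apply LinearEquiv.toLinearMap_injective
        dsimp only [Function.comp]
        rw [tvE_coe (x := (b' i, w' i, τ' i)) (arrow_not_mem_bypass hnc (h1' i hi).1)]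
        exact (hg' i hi).symm
      rw [prodE, hmap2]
      exact hψ'.symm
    have heq : L = M := by
      refine list_unique hnc hnm (L.length + M.length) L M le_rfl
        (fun x hx => ⟨(hLmem x hx).1, (hLmem x hx).2.1⟩) hMvalid hLchain hMchain ?_
      rw [hMprod]
      exact hLprod.symm
    constructor
    · rw [← hMlen, ← heq]
    · intro i hi
      have hLi : L.getD i dflt = (b' i, w' i, τ' i) := by
        rw [heq]
        exact hMget i (by rw [← hMlen, ← heq]; exact hi)
      dsimp only
      rw [hLi]
      exact ⟨rfl, rfl, rfl⟩

end Quiv
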